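/- arXiv:1311.2445 — 10 statements merged into one kernel-verified Lean document; each statement's English description precedes it below -/
import Mathlib

section
/- Let Wₙ = (1/n) Σᵢ₌₁ⁿ Xᵢ ψ(εᵢ). Then (i) ‖β̂‖ ≤ (1/τ)·‖Wₙ‖ (as a deterministic inequality); and (ii) if the Xᵢ are independent random vectors with mean 0 and covariance Id_p, independent of the εᵢ, then E[‖β̂‖²] ≤ (1/τ²)·(p/n)·(1/n) Σᵢ₌₁ⁿ E[ψ²(εᵢ)]. -/
/-!
Pairing the estimating equation `τ β̂ = (1/n) Σᵢ ψ(εᵢ - ⟪Xᵢ, β̂⟫) Xᵢ` with `β̂` and using that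
`ψ = ρ'` is monotone, so that `ψ(a - s) s ≤ ψ(a) s`, gives `τ ‖β̂‖² ≤ ⟪Wₙ, β̂⟫ ≤ ‖Wₙ‖ ‖β̂‖`,
which is (i). For (ii), expand `‖Σᵢ ψ(εᵢ) Xᵢ‖² = Σᵢⱼ ψ(εᵢ) ψ(εⱼ) ⟪Xᵢ, Xⱼ⟫`: independence of the
`Xᵢ` from the `εᵢ` factors each expectation, the cross terms vanish because distinct `Xᵢ` are
independent and centred, and `E ‖Xᵢ‖² = tr Id_p = p`.
-/

noncomputable section

open scoped BigOperators
open MeasureTheory ProbabilityTheory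

/-- The gradient-type map `f(β) = -(1/n) Σᵢ Xᵢ ψ(εᵢ - Xᵢᵀβ) + τβ`, with `ψ = ρ'`. -/
def fgrad {p n : ℕ} (ρ : ℝ → ℝ) (τ : ℝ) (X : Fin n → EuclideanSpace ℝ (Fin p))
    (ε : Fin n → ℝ) (β : EuclideanSpace ℝ (Fin p)) : EuclideanSpace ℝ (Fin p) :=
  τ • β - (1 / (n : ℝ)) • ∑ i, deriv ρ (ε i - ∑ k, X i k * β k) • X i

/-- `Wₙ = (1/n) Σᵢ Xᵢ ψ(εᵢ)`. -/
def Wn {p n : ℕ} (ρ : ℝ → ℝ) (X : Fin n → EuclideanSpace ℝ (Fin p))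
    (ε : Fin n → ℝ) : EuclideanSpace ℝ (Fin p) :=
  (1 / (n : ℝ)) • ∑ i, deriv ρ (ε i) • X i

open Finset
open scoped InnerProductSpace

theorem Monotone.apply_sub_mul_le {ψ : ℝ → ℝ} (hψ : Monotone ψ) (a s : ℝ) :
    ψ (a - s) * s ≤ ψ a * s := by
  rcases le_total 0 s with hs | hs
  · exact mul_le_mul_of_nonneg_right (hψ (by linarith)) hs
  · exact mul_le_mul_of_nonpos_right (hψ (by linarith)) hs

section InnerProductSpace

variable {E ι : Type*} [NormedAddCommGroup E] [InnerProductSpace ℝ E]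

theorem norm_le_of_mul_norm_sq_le_inner {τ : ℝ} (hτ : 0 < τ) {w β : E}
    (h : τ * ‖β‖ ^ 2 ≤ ⟪w, β⟫_ℝ) : ‖β‖ ≤ 1 / τ * ‖w‖ := by
  have hcs : τ * ‖β‖ ^ 2 ≤ ‖w‖ * ‖β‖ := h.trans (real_inner_le_norm w β)
  rw [one_div_mul_eq_div, le_div_iff₀' hτ]
  rcases (norm_nonneg β).eq_or_lt with h0 | h0
  · rw [← h0, mul_zero]
    exact norm_nonneg w
  · nlinarith

theorem mul_norm_sq_le_inner_of_smul_eq_sum {ψ : ℝ → ℝ} (hψ : Monotone ψ) {τ c : ℝ}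
    (hc : 0 ≤ c) (s : Finset ι) (x : ι → E) (a : ι → ℝ) {β : E}
    (hβ : τ • β = c • ∑ i ∈ s, ψ (a i - ⟪x i, β⟫_ℝ) • x i) :
    τ * ‖β‖ ^ 2 ≤ ⟪c • ∑ i ∈ s, ψ (a i) • x i, β⟫_ℝ := by
  have key : ⟪τ • β, β⟫_ℝ = c * ∑ i ∈ s, ψ (a i - ⟪x i, β⟫_ℝ) * ⟪x i, β⟫_ℝ := by
    simp only [hβ, real_inner_smul_left, sum_inner]
  rw [real_inner_smul_left, real_inner_self_eq_norm_sq] at key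
  simp only [key, real_inner_smul_left, sum_inner]
  exact mul_le_mul_of_nonneg_left (sum_le_sum fun i _ => hψ.apply_sub_mul_le _ _) hc

theorem norm_sum_smul_sq (s : Finset ι) (c : ι → ℝ) (v : ι → E) :
    ‖∑ i ∈ s, c i • v i‖ ^ 2 = ∑ i ∈ s, ∑ j ∈ s, c i * c j * ⟪v i, v j⟫_ℝ := by
  simp only [← real_inner_self_eq_norm_sq, sum_inner, inner_sum, real_inner_smul_left,
    real_inner_smul_right]
  exact sum_congr rfl fun i _ => sum_congr rfl fun j _ => by rw [real_inner_comm]; ring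

end InnerProductSpace

theorem ConvexOn.monotone_deriv {ρ : ℝ → ℝ} (hρ : ConvexOn ℝ Set.univ ρ)
    (hρd : Differentiable ℝ ρ) : Monotone (deriv ρ) :=
  monotoneOn_univ.mp <| hρ.monotoneOn_deriv fun x _ => hρd x

theorem EuclideanSpace.real_inner_eq_sum {ι : Type*} [Fintype ι] (x y : EuclideanSpace ℝ ι) :
    ⟪x, y⟫_ℝ = ∑ k, x k * y k := by
  simp [PiLp.inner_apply, mul_comm]

section Estimator

variable {p n : ℕ} {ρ : ℝ → ℝ} {τ : ℝ} {X : Fin n → EuclideanSpace ℝ (Fin p)} {ε : Fin n → ℝ}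
  {β : EuclideanSpace ℝ (Fin p)}

theorem fgrad_eq_inner :
    fgrad ρ τ X ε β = τ • β - (1 / (n : ℝ)) • ∑ i, deriv ρ (ε i - ⟪X i, β⟫_ℝ) • X i := by
  simp only [fgrad, EuclideanSpace.real_inner_eq_sum]

theorem norm_le_of_fgrad_eq_zero (hψ : Monotone (deriv ρ)) (hτ : 0 < τ)
    (h : fgrad ρ τ X ε β = 0) : ‖β‖ ≤ 1 / τ * ‖Wn ρ X ε‖ := by
  rw [fgrad_eq_inner, sub_eq_zero] at h
  exact norm_le_of_mul_norm_sq_le_inner hτ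
    (mul_norm_sq_le_inner_of_smul_eq_sum hψ (by positivity) _ _ _ h)

theorem sq_norm_le_of_fgrad_eq_zero (hψ : Monotone (deriv ρ)) (hτ : 0 < τ)
    (h : fgrad ρ τ X ε β = 0) :
    ‖β‖ ^ 2 ≤ (1 / τ) ^ 2 * (1 / (n : ℝ)) ^ 2 * ‖∑ i, deriv ρ (ε i) • X i‖ ^ 2 := by
  calc ‖β‖ ^ 2 ≤ (1 / τ * ‖Wn ρ X ε‖) ^ 2 := by gcongr; exact norm_le_of_fgrad_eq_zero hψ hτ h
    _ = _ := by rw [Wn, norm_smul, Real.norm_of_nonneg (by positivity)]; ring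

end Estimator

theorem memLp_two_of_integral_mul_self_ne_zero {Ω : Type*} [MeasurableSpace Ω] {μ : Measure Ω}
    {f : Ω → ℝ} (hf : AEStronglyMeasurable f μ) (h : ∫ ω, f ω * f ω ∂μ ≠ 0) : MemLp f 2 μ :=
  (memLp_two_iff_integrable_sq hf).2 <| by
    simpa only [sq] using Integrable.of_integral_ne_zero h

section SecondMoment

variable {Ω ι : Type*} [MeasurableSpace Ω] {μ : Measure Ω} {p : ℕ}
  {X : ι → Ω → EuclideanSpace ℝ (Fin p)} {g : ι → Ω → ℝ}

theorem integrable_inner_of_memLp (hX : ∀ i k, MemLp (fun ω => X i ω k) 2 μ) (i j : ι) :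
    Integrable (fun ω => ⟪X i ω, X j ω⟫_ℝ) μ := by
  simp only [EuclideanSpace.real_inner_eq_sum]
  exact integrable_finsetSum _ fun k _ => (hX i k).integrable_mul (hX j k)

theorem integral_inner_eq_zero_of_indepFun {i j : ι} (hij : IndepFun (X i) (X j) μ)
    (hX : ∀ i k, MemLp (fun ω => X i ω k) 2 μ) (hXmean : ∀ i k, ∫ ω, X i ω k ∂μ = 0) :
    ∫ ω, ⟪X i ω, X j ω⟫_ℝ ∂μ = 0 := by
  simp only [EuclideanSpace.real_inner_eq_sum]
  have hint (k : Fin p) : Integrable (fun ω => X i ω k * X j ω k) μ :=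
    (hX i k).integrable_mul (hX j k)
  rw [integral_finsetSum _ fun k _ => hint k]
  refine sum_eq_zero fun k _ => ?_
  have hk : IndepFun (fun ω => X i ω k) (fun ω => X j ω k) μ :=
    hij.comp (φ := fun x : EuclideanSpace ℝ (Fin p) => x k)
      (ψ := fun x : EuclideanSpace ℝ (Fin p) => x k) (by fun_prop) (by fun_prop)
  rw [hk.integral_fun_mul_eq_mul_integral (hX i k).1 (hX j k).1]
  simp [hXmean i k]

theorem integral_norm_sq_eq_of_integral_mul_self (hX : ∀ i k, MemLp (fun ω => X i ω k) 2 μ)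
    (hXsq : ∀ i k, ∫ ω, X i ω k * X i ω k ∂μ = 1) (i : ι) :
    ∫ ω, ‖X i ω‖ ^ 2 ∂μ = p := by
  simp only [← real_inner_self_eq_norm_sq, EuclideanSpace.real_inner_eq_sum]
  have hint (k : Fin p) : Integrable (fun ω => X i ω k * X i ω k) μ :=
    (hX i k).integrable_mul (hX i k)
  rw [integral_finsetSum _ fun k _ => hint k]
  simp [hXsq]

theorem indepFun_mul_inner (hXg : IndepFun (fun ω i => X i ω) (fun ω i => g i ω) μ) (i j : ι) :
    IndepFun (fun ω => g i ω * g j ω) (fun ω => ⟪X i ω, X j ω⟫_ℝ) μ :=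
  hXg.symm.comp (φ := fun e : ι → ℝ => e i * e j)
    (ψ := fun x : ι → EuclideanSpace ℝ (Fin p) => ⟪x i, x j⟫_ℝ) (by fun_prop) (by fun_prop)

theorem integrable_mul_mul_inner (hX : ∀ i k, MemLp (fun ω => X i ω k) 2 μ)
    (hg : ∀ i, MemLp (g i) 2 μ) (hXg : IndepFun (fun ω i => X i ω) (fun ω i => g i ω) μ)
    (i j : ι) : Integrable (fun ω => g i ω * g j ω * ⟪X i ω, X j ω⟫_ℝ) μ :=
  (indepFun_mul_inner hXg i j).integrable_mul ((hg i).integrable_mul (hg j))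
    (integrable_inner_of_memLp hX i j)

theorem integrable_norm_sum_smul_sq [Fintype ι] (hX : ∀ i k, MemLp (fun ω => X i ω k) 2 μ)
    (hg : ∀ i, MemLp (g i) 2 μ) (hXg : IndepFun (fun ω i => X i ω) (fun ω i => g i ω) μ) :
    Integrable (fun ω => ‖∑ i, g i ω • X i ω‖ ^ 2) μ := by
  simp only [norm_sum_smul_sq]
  exact integrable_finsetSum _ fun i _ => integrable_finsetSum _ fun j _ =>
    integrable_mul_mul_inner hX hg hXg i j

theorem integral_norm_sum_smul_sq [Fintype ι] (hX : ∀ i k, MemLp (fun ω => X i ω k) 2 μ)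
    (hXindep : Pairwise fun i j => IndepFun (X i) (X j) μ)
    (hXmean : ∀ i k, ∫ ω, X i ω k ∂μ = 0) (hg : ∀ i, MemLp (g i) 2 μ)
    (hXg : IndepFun (fun ω i => X i ω) (fun ω i => g i ω) μ) :
    ∫ ω, ‖∑ i, g i ω • X i ω‖ ^ 2 ∂μ = ∑ i, (∫ ω, g i ω ^ 2 ∂μ) * ∫ ω, ‖X i ω‖ ^ 2 ∂μ := by
  have hterm (i j : ι) : ∫ ω, g i ω * g j ω * ⟪X i ω, X j ω⟫_ℝ ∂μ
      = (∫ ω, g i ω * g j ω ∂μ) * ∫ ω, ⟪X i ω, X j ω⟫_ℝ ∂μ :=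
    (indepFun_mul_inner hXg i j).integral_fun_mul_eq_mul_integral ((hg i).1.mul (hg j).1)
      (integrable_inner_of_memLp hX i j).1
  simp only [norm_sum_smul_sq]
  rw [integral_finsetSum _ fun i _ => integrable_finsetSum _ fun j _ =>
    integrable_mul_mul_inner hX hg hXg i j]
  refine sum_congr rfl fun i _ => ?_
  have hoff (j : ι) (hji : j ≠ i) : ∫ ω, g i ω * g j ω * ⟪X i ω, X j ω⟫_ℝ ∂μ = 0 := by
    rw [hterm, integral_inner_eq_zero_of_indepFun (hXindep hji.symm) hX hXmean, mul_zero]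
  rw [integral_finsetSum _ fun j _ => integrable_mul_mul_inner hX hg hXg i j,
    sum_eq_single i (fun j _ => hoff j) (by simp), hterm]
  simp only [← sq, real_inner_self_eq_norm_sq]

theorem lintegral_norm_sum_smul_sq_le [Fintype ι] (hXmeas : ∀ i, Measurable (X i))
    (hXindep : Pairwise fun i j => IndepFun (X i) (X j) μ)
    (hXmean : ∀ i k, ∫ ω, X i ω k ∂μ = 0) (hXsq : ∀ i k, ∫ ω, X i ω k * X i ω k ∂μ = 1)
    (hgmeas : ∀ i, Measurable (g i))
    (hXg : IndepFun (fun ω i => X i ω) (fun ω i => g i ω) μ) :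
    ∫⁻ ω, ENNReal.ofReal (‖∑ i, g i ω • X i ω‖ ^ 2) ∂μ
      ≤ p * ∑ i, ∫⁻ ω, ENNReal.ofReal (g i ω ^ 2) ∂μ := by
  have hX (i : ι) (k : Fin p) : MemLp (fun ω => X i ω k) 2 μ :=
    memLp_two_of_integral_mul_self_ne_zero (by fun_prop) (by simp [hXsq])
  by_cases hinf : ∃ i, ∫⁻ ω, ENNReal.ofReal (g i ω ^ 2) ∂μ = ⊤
  · obtain ⟨i, hi⟩ := hinf
    rcases Nat.eq_zero_or_pos p with rfl | hp
    · simp [Subsingleton.elim _ (0 : EuclideanSpace ℝ (Fin 0))]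
    · rw [ENNReal.sum_eq_top.2 ⟨i, mem_univ i, hi⟩, ENNReal.mul_top (by exact_mod_cast hp.ne')]
      exact le_top
  have hg (i : ι) : MemLp (g i) 2 μ :=
    (memLp_two_iff_integrable_sq (hgmeas i).aestronglyMeasurable).2
      ⟨((hgmeas i).pow_const 2).aestronglyMeasurable,
        (hasFiniteIntegral_iff_ofReal (ae_of_all _ fun ω => sq_nonneg _)).2
          (lt_top_iff_ne_top.2 (not_exists.1 hinf i))⟩
  rw [← ofReal_integral_eq_lintegral_ofReal (integrable_norm_sum_smul_sq hX hg hXg)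
    (ae_of_all _ fun ω => sq_nonneg _), integral_norm_sum_smul_sq hX hXindep hXmean hg hXg,
    ENNReal.ofReal_sum_of_nonneg fun i _ => by positivity, mul_sum]
  refine (sum_congr rfl fun i _ => ?_).le
  rw [integral_norm_sq_eq_of_integral_mul_self hX hXsq, ENNReal.ofReal_mul (by positivity),
    ofReal_integral_eq_lintegral_ofReal (hg i).integrable_sq
      (ae_of_all _ fun ω => sq_nonneg _), ENNReal.ofReal_natCast, mul_comm]

end SecondMoment

theorem statement2_general {p n : ℕ} {Ω : Type*} [MeasurableSpace Ω] (μ : Measure Ω)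
    (ρ : ℝ → ℝ) (τ : ℝ) (hτ : 0 < τ)
    (hρconv : ConvexOn ℝ Set.univ ρ) (hρsmooth : ContDiff ℝ 2 ρ)
    (X : Fin n → Ω → EuclideanSpace ℝ (Fin p)) (ε : Fin n → Ω → ℝ)
    (βhat : Ω → EuclideanSpace ℝ (Fin p))
    (hβhat : ∀ ω, fgrad ρ τ (fun i => X i ω) (fun i => ε i ω) (βhat ω) = 0)
    (hXmeas : ∀ i, Measurable (X i)) (hεmeas : ∀ i, Measurable (ε i))
    -- the Xᵢ's are independent random vectors
    (hXindep : iIndepFun X μ)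
    -- mean zero
    (hXmean : ∀ i k, ∫ ω, X i ω k ∂μ = 0)
    -- covariance `Id_p`
    (hXcov : ∀ i k l, ∫ ω, X i ω k * X i ω l ∂μ = if k = l then (1 : ℝ) else 0)
    -- the Xᵢ's are independent of the εᵢ's
    (hXε : IndepFun (fun ω => fun i => X i ω) (fun ω => fun i => ε i ω) μ) :
    -- (i) the deterministic bound ‖β̂‖ ≤ (1/τ)·‖Wₙ‖
    (∀ ω, ‖βhat ω‖ ≤ (1 / τ) * ‖Wn ρ (fun i => X i ω) (fun i => ε i ω)‖) ∧
    -- (ii) E[‖β̂‖²] ≤ (1/τ²)·(p/n)·(1/n) Σᵢ E[ψ²(εᵢ)]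
    ∫⁻ ω, ENNReal.ofReal (‖βhat ω‖ ^ 2) ∂μ ≤
      ENNReal.ofReal ((1 / τ ^ 2) * ((p : ℝ) / (n : ℝ)) * (1 / (n : ℝ))) *
        ∑ i, ∫⁻ ω, ENNReal.ofReal ((deriv ρ (ε i ω)) ^ 2) ∂μ := by
  have hψ : Monotone (deriv ρ) := hρconv.monotone_deriv (hρsmooth.differentiable (by norm_num))
  refine ⟨fun ω => norm_le_of_fgrad_eq_zero hψ hτ (hβhat ω), ?_⟩
  have hψε : IndepFun (fun ω i => X i ω) (fun ω i => deriv ρ (ε i ω)) μ :=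
    hXε.comp (φ := id) (ψ := fun (e : Fin n → ℝ) i => deriv ρ (e i)) measurable_id
      (measurable_pi_lambda _ fun i => by exact (measurable_deriv ρ).comp (measurable_pi_apply i))
  have hmoment := lintegral_norm_sum_smul_sq_le (g := fun i ω => deriv ρ (ε i ω)) hXmeas
    (fun i j hij => hXindep.indepFun hij) hXmean (fun i k => by simpa using hXcov i k k)
    (fun i => by exact (measurable_deriv ρ).comp (hεmeas i)) hψε
  set c : ℝ := (1 / τ) ^ 2 * (1 / (n : ℝ)) ^ 2
  calc ∫⁻ ω, ENNReal.ofReal (‖βhat ω‖ ^ 2) ∂μ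
      ≤ ∫⁻ ω, ENNReal.ofReal c * ENNReal.ofReal (‖∑ i, deriv ρ (ε i ω) • X i ω‖ ^ 2) ∂μ :=
        lintegral_mono fun ω => by
          rw [← ENNReal.ofReal_mul (by positivity)]
          exact ENNReal.ofReal_le_ofReal (sq_norm_le_of_fgrad_eq_zero hψ hτ (hβhat ω))
    _ = ENNReal.ofReal c * ∫⁻ ω, ENNReal.ofReal (‖∑ i, deriv ρ (ε i ω) • X i ω‖ ^ 2) ∂μ :=
        lintegral_const_mul' _ _ ENNReal.ofReal_ne_top
    _ ≤ ENNReal.ofReal c * (p * ∑ i, ∫⁻ ω, ENNReal.ofReal (deriv ρ (ε i ω) ^ 2) ∂μ) := by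
        gcongr
    _ = _ := by
        rw [← mul_assoc, ← ENNReal.ofReal_natCast, ← ENNReal.ofReal_mul (by positivity)]
        congr 2
        ring

theorem statement2 {p n : ℕ} {Ω : Type*} [MeasurableSpace Ω] (μ : Measure Ω)
    [IsProbabilityMeasure μ]
    (ρ : ℝ → ℝ) (τ : ℝ) (hτ : 0 < τ)
    (hρconv : ConvexOn ℝ Set.univ ρ) (hρsmooth : ContDiff ℝ 2 ρ)
    (hρnonneg : ∀ x, 0 ≤ ρ x) (hρzero : ρ 0 = 0)
    (X : Fin n → Ω → EuclideanSpace ℝ (Fin p)) (ε : Fin n → Ω → ℝ)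
    (βhat : Ω → EuclideanSpace ℝ (Fin p))
    (hβhat : ∀ ω, fgrad ρ τ (fun i => X i ω) (fun i => ε i ω) (βhat ω) = 0)
    (hXmeas : ∀ i, Measurable (X i)) (hεmeas : ∀ i, Measurable (ε i))
    -- the Xᵢ's are independent random vectors
    (hXindep : iIndepFun X μ)
    -- mean zero
    (hXmean : ∀ i k, ∫ ω, X i ω k ∂μ = 0)
    -- covariance `Id_p`
    (hXcov : ∀ i k l, ∫ ω, X i ω k * X i ω l ∂μ = if k = l then (1 : ℝ) else 0)
    -- the Xᵢ's are independent of the εᵢ's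
    (hXε : IndepFun (fun ω => fun i => X i ω) (fun ω => fun i => ε i ω) μ) :
    -- (i) the deterministic bound ‖β̂‖ ≤ (1/τ)·‖Wₙ‖
    (∀ ω, ‖βhat ω‖ ≤ (1 / τ) * ‖Wn ρ (fun i => X i ω) (fun i => ε i ω)‖) ∧
    -- (ii) E[‖β̂‖²] ≤ (1/τ²)·(p/n)·(1/n) Σᵢ E[ψ²(εᵢ)]
    ∫⁻ ω, ENNReal.ofReal (‖βhat ω‖ ^ 2) ∂μ ≤
      ENNReal.ofReal ((1 / τ ^ 2) * ((p : ℝ) / (n : ℝ)) * (1 / (n : ℝ))) *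
        ∑ i, ∫⁻ ω, ENNReal.ofReal ((deriv ρ (ε i ω)) ^ 2) ∂μ :=
  statement2_general μ ρ τ hτ hρconv hρsmooth X ε βhat hβhat hXmeas hεmeas hXindep hXmean hXcov hXε
end
end

section
/- The correction vector ηᵢ satisfies ‖ηᵢ‖ ≤ (1/(√n · τ)) · (‖Xᵢ‖/√n) · min(|ψ(r̃_{i,(i)})|, |r̃_{i,(i)}|/cᵢ). Moreover, for any real numbers γ*_j (j ≠ i), the vector 𝓡ᵢ = (1/n) Σ_{j≠i} [ψ'(γ*_j) − ψ'(r̃_{j,(i)})] Xⱼ Xⱼᵀ ηᵢ satisfies ‖𝓡ᵢ‖ ≤ ‖Σ̂‖_op · sup_{j≠i} |ψ'(γ*_j) − ψ'(r̃_{j,(i)})| · (1/(√n · τ)) · (‖Xᵢ‖/√n) · min(|ψ(r̃_{i,(i)})|, |r̃_{i,(i)}|/cᵢ), where ‖Σ̂‖_op is the operator norm of Σ̂ = (1/n) Σᵢ Xᵢ Xᵢᵀ. -/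
/-!
The prox identity `y + c ψ(y) = x`, with `ψ` monotone and `ψ(0) = 0`, puts `y` between `0` and
`x`; hence `|ψ(y)| ≤ min(|ψ(x)|, |x|/c)`. Convexity gives `ψ' ≥ 0`, so `Sᵢ` is positive
semidefinite and `τ ‖(Sᵢ + τ Id)⁻¹ Xᵢ‖ ≤ ‖Xᵢ‖`, which bounds `ηᵢ`. For
`𝓡ᵢ = (1/n) Σ_{j≠i} aⱼ ⟨Xⱼ, ηᵢ⟩ Xⱼ`, pairing `𝓡ᵢ` with itself and applying Cauchy–Schwarz to the
weighted sum gives `‖𝓡ᵢ‖² ≤ sup |aⱼ| · ‖Σ̂‖ ‖ηᵢ‖ ‖𝓡ᵢ‖`, because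
`(1/n) Σ ⟨Xⱼ, w⟩² ≤ ⟨w, Σ̂ w⟩ ≤ ‖Σ̂‖ ‖w‖²`.
-/

noncomputable section

open scoped BigOperators

/-- View a plain vector as an element of Euclidean space. -/
def toE {p : ℕ} (v : Fin p → ℝ) : EuclideanSpace ℝ (Fin p) := WithLp.toLp 2 v

/-- Residual `ε j - Xⱼᵀβ`. -/
def resid {p n : ℕ} (X : Fin n → EuclideanSpace ℝ (Fin p)) (ε : Fin n → ℝ)
    (β : EuclideanSpace ℝ (Fin p)) (j : Fin n) : ℝ :=
  ε j - ∑ k, X j k * β k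

/-- The leave-one-out gradient map `fᵢ(β) = -(1/n) Σ_{j≠i} Xⱼ ψ(εⱼ - Xⱼᵀβ) + τβ`. -/
def fgradLOO {p n : ℕ} (ρ : ℝ → ℝ) (τ : ℝ) (X : Fin n → EuclideanSpace ℝ (Fin p))
    (ε : Fin n → ℝ) (i : Fin n) (β : EuclideanSpace ℝ (Fin p)) :
    EuclideanSpace ℝ (Fin p) :=
  τ • β - (1 / (n : ℝ)) • ∑ j ∈ Finset.univ.erase i, deriv ρ (resid X ε β j) • X j

/-- `Sᵢ = (1/n) Σ_{j≠i} ψ'(r̃_{j,(i)}) Xⱼ Xⱼᵀ`. -/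
def Smat {p n : ℕ} (ρ : ℝ → ℝ) (X : Fin n → EuclideanSpace ℝ (Fin p)) (ε : Fin n → ℝ)
    (i : Fin n) (βi : EuclideanSpace ℝ (Fin p)) : Matrix (Fin p) (Fin p) ℝ :=
  (1 / (n : ℝ)) • ∑ j ∈ Finset.univ.erase i,
    deriv (deriv ρ) (resid X ε βi j) • Matrix.vecMulVec (fun k => X j k) (fun k => X j k)

/-- `cᵢ = (1/n) Xᵢᵀ (Sᵢ + τ Id)⁻¹ Xᵢ`. -/
def cval {p n : ℕ} (ρ : ℝ → ℝ) (τ : ℝ) (X : Fin n → EuclideanSpace ℝ (Fin p))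
    (ε : Fin n → ℝ) (i : Fin n) (βi : EuclideanSpace ℝ (Fin p)) : ℝ :=
  (1 / (n : ℝ)) * ∑ k, X i k *
    ((Smat ρ X ε i βi + τ • (1 : Matrix (Fin p) (Fin p) ℝ))⁻¹.mulVec (fun l => X i l)) k

/-- `ηᵢ = (1/n)(Sᵢ + τ Id)⁻¹ Xᵢ ψ(pr)`, where `pr = prox_{cᵢ}(ρ)(r̃_{i,(i)})`. -/
def etaVec {p n : ℕ} (ρ : ℝ → ℝ) (τ : ℝ) (X : Fin n → EuclideanSpace ℝ (Fin p))
    (ε : Fin n → ℝ) (i : Fin n) (βi : EuclideanSpace ℝ (Fin p)) (pr : ℝ) :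
    EuclideanSpace ℝ (Fin p) :=
  ((1 / (n : ℝ)) * deriv ρ pr) •
    toE ((Smat ρ X ε i βi + τ • (1 : Matrix (Fin p) (Fin p) ℝ))⁻¹.mulVec (fun l => X i l))

/-- The sample covariance matrix `Σ̂ = (1/n) Σᵢ Xᵢ Xᵢᵀ`. -/
def sigmaHat {p n : ℕ} (X : Fin n → EuclideanSpace ℝ (Fin p)) :
    Matrix (Fin p) (Fin p) ℝ :=
  (1 / (n : ℝ)) • ∑ i, Matrix.vecMulVec (fun k => X i k) (fun k => X i k)

open Matrix

theorem abs_le_min_of_add_mul_eq {ψ : ℝ → ℝ} (hψ : Monotone ψ) (hψ0 : ψ 0 = 0) {c x y : ℝ}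
    (hc : 0 < c) (h : y + c * ψ y = x) : |ψ y| ≤ min |ψ x| (|x| / c) := by
  rw [le_min_iff, le_div_iff₀ hc]
  rcases le_total 0 y with hy | hy
  · have hψy : 0 ≤ ψ y := hψ0 ▸ hψ hy
    have hyx : y ≤ x := by nlinarith
    have hψx : ψ y ≤ ψ x := hψ hyx
    rw [abs_of_nonneg hψy, abs_of_nonneg (hψy.trans hψx), abs_of_nonneg (hy.trans hyx)]
    constructor <;> nlinarith
  · have hψy : ψ y ≤ 0 := hψ0 ▸ hψ hy
    have hxy : x ≤ y := by nlinarith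
    have hψx : ψ x ≤ ψ y := hψ hxy
    rw [abs_of_nonpos hψy, abs_of_nonpos (hψx.trans hψy), abs_of_nonpos (hxy.trans hy)]
    constructor <;> nlinarith

theorem LinearMap.IsPositive.mul_norm_le_norm_add_smul {E : Type*} [NormedAddCommGroup E]
    [InnerProductSpace ℝ E] {T : E →ₗ[ℝ] E} (hT : T.IsPositive) {τ : ℝ} (u : E) :
    τ * ‖u‖ ≤ ‖T u + τ • u‖ := by
  rcases (norm_nonneg u).eq_or_lt with hu | hu
  · simp [← hu]
  refine le_of_mul_le_mul_right ?_ hu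
  calc τ * ‖u‖ * ‖u‖ ≤ inner ℝ (T u) u + τ * ‖u‖ ^ 2 := by
        nlinarith [hT.inner_nonneg_left u]
    _ = inner ℝ (T u + τ • u) u := by
        rw [inner_add_left, real_inner_smul_left, real_inner_self_eq_norm_sq]
    _ ≤ ‖T u + τ • u‖ * ‖u‖ := real_inner_le_norm _ _

theorem Matrix.PosSemidef.mul_norm_inv_add_smul_one_mulVec_le {m : Type*} [Fintype m]
    [DecidableEq m] {S : Matrix m m ℝ} (hS : S.PosSemidef) {τ : ℝ} (hτ : 0 < τ)
    (x : EuclideanSpace ℝ m) : τ * ‖WithLp.toLp 2 ((S + τ • 1)⁻¹ *ᵥ x.ofLp)‖ ≤ ‖x‖ := by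
  have hM : IsUnit (S + τ • 1) := (PosDef.posSemidef_add hS (PosDef.one.smul hτ)).isUnit
  set v := (S + τ • 1)⁻¹ *ᵥ x.ofLp with hv
  have hsolve : S *ᵥ v + τ • v = x.ofLp := by
    nth_rw 2 [← one_mulVec v]
    rw [← smul_mulVec, ← add_mulVec, hv, mulVec_mulVec,
      mul_nonsing_inv _ ((isUnit_iff_isUnit_det _).mp hM), one_mulVec]
  have hu : toEuclideanLin S (WithLp.toLp 2 v) + τ • WithLp.toLp 2 v = x := by
    ext k
    exact congrFun hsolve k
  exact hu ▸ (isPositive_toEuclideanLin_iff.mpr hS).mul_norm_le_norm_add_smul (WithLp.toLp 2 v)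

theorem Matrix.posSemidef_smul_sum_smul_vecMulVec_self {ι m : Type*} [Fintype m] (s : Finset ι)
    {c : ℝ} (hc : 0 ≤ c) {d : ι → ℝ} (hd : ∀ j ∈ s, 0 ≤ d j) (w : ι → m → ℝ) :
    (c • ∑ j ∈ s, d j • vecMulVec (w j) (w j)).PosSemidef :=
  .smul (posSemidef_sum s fun j hj => .smul (by
    simpa using posSemidef_vecMulVec_self_star (w j)) (hd j hj)) hc

theorem norm_smul_sum_mul_inner_smul_le {ι E : Type*} [NormedAddCommGroup E]
    [InnerProductSpace ℝ E] (s : Finset ι) (x : ι → E) (a : ι → ℝ) {c K σ : ℝ} (hc : 0 ≤ c)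
    (hK : 0 ≤ K) (hσ : 0 ≤ σ) (ha : ∀ j ∈ s, |a j| ≤ σ)
    (hQ : ∀ w, c * ∑ j ∈ s, inner ℝ (x j) w ^ 2 ≤ K * ‖w‖ ^ 2) (η : E) :
    ‖c • ∑ j ∈ s, (a j * inner ℝ (x j) η) • x j‖ ≤ K * σ * ‖η‖ := by
  set v := c • ∑ j ∈ s, (a j * inner ℝ (x j) η) • x j
  set T := c * ∑ j ∈ s, |inner ℝ (x j) η| * |inner ℝ (x j) v|
  have hT : T ≤ K * ‖η‖ * ‖v‖ := by
    refine (pow_le_pow_iff_left₀ (by positivity) (by positivity) two_ne_zero).mp ?_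
    have hCS := Finset.sum_mul_sq_le_sq_mul_sq s (fun j => |inner ℝ (x j) η|)
      (fun j => |inner ℝ (x j) v|)
    simp only [sq_abs] at hCS
    calc T ^ 2 ≤ (c * ∑ j ∈ s, inner ℝ (x j) η ^ 2) * (c * ∑ j ∈ s, inner ℝ (x j) v ^ 2) := by
          rw [mul_pow, mul_mul_mul_comm, ← sq]
          gcongr
      _ ≤ (K * ‖η‖ ^ 2) * (K * ‖v‖ ^ 2) :=
          mul_le_mul (hQ η) (hQ v) (by positivity) (by positivity)
      _ = (K * ‖η‖ * ‖v‖) ^ 2 := by ring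
  have hv : ‖v‖ ^ 2 ≤ σ * (K * ‖η‖ * ‖v‖) := by
    calc ‖v‖ ^ 2 = c * ∑ j ∈ s, a j * (inner ℝ (x j) η * inner ℝ (x j) v) := by
          simp only [v, ← real_inner_self_eq_norm_sq, real_inner_smul_left, sum_inner,
            mul_assoc]
      _ ≤ c * ∑ j ∈ s, σ * (|inner ℝ (x j) η| * |inner ℝ (x j) v|) := by
          refine mul_le_mul_of_nonneg_left (Finset.sum_le_sum fun j hj => ?_) hc
          calc _ ≤ |a j * (inner ℝ (x j) η * inner ℝ (x j) v)| := le_abs_self _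
            _ = |a j| * (|inner ℝ (x j) η| * |inner ℝ (x j) v|) := by simp only [abs_mul]
            _ ≤ _ := by gcongr; exact ha j hj
      _ = σ * T := by rw [← Finset.mul_sum]; ring
      _ ≤ σ * (K * ‖η‖ * ‖v‖) := by gcongr
  rcases (norm_nonneg v).eq_or_lt with hv0 | hv0
  · rw [← hv0]; positivity
  · nlinarith

theorem sum_mul_eq_inner {m : Type*} [Fintype m] (x y : EuclideanSpace ℝ m) :
    ∑ k, x k * y k = inner ℝ x y := by
  simp [PiLp.inner_apply, mul_comm]

theorem toEuclideanCLM_sigmaHat_apply {p n : ℕ} (X : Fin n → EuclideanSpace ℝ (Fin p))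
    (w : EuclideanSpace ℝ (Fin p)) :
    toEuclideanCLM (𝕜 := ℝ) (sigmaHat X) w = (1 / (n : ℝ)) • ∑ j, inner ℝ (X j) w • X j := by
  ext k
  simp [sigmaHat, vecMulVec_mulVec, ← sum_mul_eq_inner, dotProduct, mul_comm]

section

variable {p n : ℕ} (X : Fin n → EuclideanSpace ℝ (Fin p))

theorem inner_toEuclideanCLM_sigmaHat_self (w : EuclideanSpace ℝ (Fin p)) :
    inner ℝ w (toEuclideanCLM (𝕜 := ℝ) (sigmaHat X) w) =
      1 / (n : ℝ) * ∑ j, inner ℝ (X j) w ^ 2 := by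
  simp only [toEuclideanCLM_sigmaHat_apply, real_inner_smul_right, inner_sum,
    real_inner_comm w, sq]

theorem one_div_mul_sum_inner_sq_le_opNorm_sigmaHat (s : Finset (Fin n))
    (w : EuclideanSpace ℝ (Fin p)) :
    1 / (n : ℝ) * ∑ j ∈ s, inner ℝ (X j) w ^ 2 ≤
      ‖toEuclideanCLM (𝕜 := ℝ) (sigmaHat X)‖ * ‖w‖ ^ 2 :=
  calc 1 / (n : ℝ) * ∑ j ∈ s, inner ℝ (X j) w ^ 2
      ≤ 1 / (n : ℝ) * ∑ j, inner ℝ (X j) w ^ 2 := by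
        gcongr
        exact s.subset_univ
    _ = inner ℝ w (toEuclideanCLM (𝕜 := ℝ) (sigmaHat X) w) :=
        (inner_toEuclideanCLM_sigmaHat_self X w).symm
    _ ≤ ‖w‖ * (‖toEuclideanCLM (𝕜 := ℝ) (sigmaHat X)‖ * ‖w‖) :=
        (real_inner_le_norm _ _).trans (by gcongr; exact ContinuousLinearMap.le_opNorm _ _)
    _ = _ := by ring

variable {X} {ρ : ℝ → ℝ} {ε : Fin n → ℝ} {i : Fin n} {βi : EuclideanSpace ℝ (Fin p)}

theorem posSemidef_Smat (hψ' : ∀ x, 0 ≤ deriv (deriv ρ) x) : (Smat ρ X ε i βi).PosSemidef :=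
  Matrix.posSemidef_smul_sum_smul_vecMulVec_self _ (by positivity) (fun _ _ => hψ' _) _

theorem norm_etaVec_le {τ : ℝ} (hτ : 0 < τ) (hS : (Smat ρ X ε i βi).PosSemidef) {pr m : ℝ}
    (hm : |deriv ρ pr| ≤ m) :
    ‖etaVec ρ τ X ε i βi pr‖ ≤ 1 / (Real.sqrt n * τ) * (‖X i‖ / Real.sqrt n) * m := by
  have hn : (0 : ℝ) < n := by exact_mod_cast i.pos
  have hu := hS.mul_norm_inv_add_smul_one_mulVec_le hτ (X i)
  calc ‖etaVec ρ τ X ε i βi pr‖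
        = 1 / n * |deriv ρ pr| *
            ‖WithLp.toLp 2 ((Smat ρ X ε i βi + τ • 1)⁻¹ *ᵥ (X i).ofLp)‖ := by
        rw [etaVec, toE, norm_smul, Real.norm_eq_abs, abs_mul, abs_of_pos (by positivity)]
    _ ≤ 1 / n * m * (‖X i‖ / τ) := by
        gcongr
        · exact mul_nonneg (by positivity) ((abs_nonneg _).trans hm)
        · rwa [le_div_iff₀ hτ, mul_comm]
    _ = _ := by
        field_simp
        rw [Real.sq_sqrt hn.le]
        ring

end

theorem statement5_general {p n : ℕ} (ρ : ℝ → ℝ) (τ : ℝ) (hτ : 0 < τ)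
    (hρconv : ConvexOn ℝ Set.univ ρ) (hρsmooth : ContDiff ℝ 2 ρ)
    (hρnonneg : ∀ x, 0 ≤ ρ x) (hρzero : ρ 0 = 0)
    (X : Fin n → EuclideanSpace ℝ (Fin p)) (ε : Fin n → ℝ) (i : Fin n)
    (βi : EuclideanSpace ℝ (Fin p))
    (hc : 0 < cval ρ τ X ε i βi)
    -- `pr` is the prox value: the unique `y` with `y + cᵢ ψ(y) = r̃_{i,(i)}`
    (pr : ℝ)
    (hpr : pr + cval ρ τ X ε i βi * deriv ρ pr = resid X ε βi i) :
    -- bound on ‖ηᵢ‖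
    (‖etaVec ρ τ X ε i βi pr‖ ≤
      (1 / (Real.sqrt n * τ)) * (‖X i‖ / Real.sqrt n) *
        min |deriv ρ (resid X ε βi i)| (|resid X ε βi i| / cval ρ τ X ε i βi)) ∧
    -- bound on ‖𝓡ᵢ‖ for any choice of the γ*ⱼ's
    (∀ γ : Fin n → ℝ,
      ‖(1 / (n : ℝ)) • ∑ j ∈ Finset.univ.erase i,
          ((deriv (deriv ρ) (γ j) - deriv (deriv ρ) (resid X ε βi j)) *
            (∑ k, X j k * etaVec ρ τ X ε i βi pr k)) • X j‖ ≤
        ‖Matrix.toEuclideanCLM (𝕜 := ℝ) (sigmaHat X)‖ *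
          (⨆ j : {j : Fin n // j ≠ i},
            |deriv (deriv ρ) (γ j) - deriv (deriv ρ) (resid X ε βi j)|) *
          ((1 / (Real.sqrt n * τ)) * (‖X i‖ / Real.sqrt n) *
            min |deriv ρ (resid X ε βi i)| (|resid X ε βi i| / cval ρ τ X ε i βi))) := by
  have hρdiff : Differentiable ℝ ρ := hρsmooth.differentiable (by norm_num)
  have hψmono : Monotone (deriv ρ) :=
    monotoneOn_univ.mp (hρconv.monotoneOn_deriv fun x _ => hρdiff x)
  have hψ0 : deriv ρ 0 = 0 :=
    IsLocalMin.deriv_eq_zero (.of_forall fun x => hρzero.le.trans (hρnonneg x))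
  have hS : (Smat ρ X ε i βi).PosSemidef := posSemidef_Smat fun _ => hψmono.deriv_nonneg
  have hη := norm_etaVec_le hτ hS (abs_le_min_of_add_mul_eq hψmono hψ0 hc hpr)
  refine ⟨hη, fun γ => ?_⟩
  set a := fun j => deriv (deriv ρ) (γ j) - deriv (deriv ρ) (resid X ε βi j)
  have hbdd : BddAbove (Set.range fun j : {j : Fin n // j ≠ i} => |a j|) :=
    (Set.finite_range _).bddAbove
  simp only [sum_mul_eq_inner]
  refine (norm_smul_sum_mul_inner_smul_le _ X a (by positivity) (norm_nonneg _)
    (Real.iSup_nonneg fun _ => abs_nonneg _)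
    (fun j hj => le_ciSup hbdd ⟨j, Finset.ne_of_mem_erase hj⟩)
    (one_div_mul_sum_inner_sq_le_opNorm_sigmaHat X _) _).trans ?_
  gcongr
  exact mul_nonneg (norm_nonneg _) (Real.iSup_nonneg fun _ => abs_nonneg _)

theorem statement5 {p n : ℕ} (ρ : ℝ → ℝ) (τ : ℝ) (hτ : 0 < τ)
    (hρconv : ConvexOn ℝ Set.univ ρ) (hρsmooth : ContDiff ℝ 2 ρ)
    (hρnonneg : ∀ x, 0 ≤ ρ x) (hρzero : ρ 0 = 0)
    (hsgn : ∀ x : ℝ, x ≠ 0 → Real.sign (deriv ρ x) = Real.sign x)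
    (X : Fin n → EuclideanSpace ℝ (Fin p)) (ε : Fin n → ℝ) (i : Fin n)
    (βi : EuclideanSpace ℝ (Fin p))
    (hβi : fgradLOO ρ τ X ε i βi = 0)
    (hc : 0 < cval ρ τ X ε i βi)
    -- `pr` is the prox value: the unique `y` with `y + cᵢ ψ(y) = r̃_{i,(i)}`
    (pr : ℝ)
    (hpr : pr + cval ρ τ X ε i βi * deriv ρ pr = resid X ε βi i) :
    -- bound on ‖ηᵢ‖
    (‖etaVec ρ τ X ε i βi pr‖ ≤
      (1 / (Real.sqrt n * τ)) * (‖X i‖ / Real.sqrt n) *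
        min |deriv ρ (resid X ε βi i)| (|resid X ε βi i| / cval ρ τ X ε i βi)) ∧
    -- bound on ‖𝓡ᵢ‖ for any choice of the γ*ⱼ's
    (∀ γ : Fin n → ℝ,
      ‖(1 / (n : ℝ)) • ∑ j ∈ Finset.univ.erase i,
          ((deriv (deriv ρ) (γ j) - deriv (deriv ρ) (resid X ε βi j)) *
            (∑ k, X j k * etaVec ρ τ X ε i βi pr k)) • X j‖ ≤
        ‖Matrix.toEuclideanCLM (𝕜 := ℝ) (sigmaHat X)‖ *
          (⨆ j : {j : Fin n // j ≠ i},
            |deriv (deriv ρ) (γ j) - deriv (deriv ρ) (resid X ε βi j)|) *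
          ((1 / (Real.sqrt n * τ)) * (‖X i‖ / Real.sqrt n) *
            min |deriv ρ (resid X ε βi i)| (|resid X ε βi i| / cval ρ τ X ε i βi))) :=
  statement5_general ρ τ hτ hρconv hρsmooth hρnonneg hρzero X ε i βi hc pr hpr
end
end

section
/- Let V₁, …, Vₙ ∈ ℝᵈ, let w₁, …, wₙ ≥ 0, and let τ > 0. Set 𝔖 = (1/n) Σᵢ wᵢ Vᵢ Vᵢᵀ, 𝔖(i) = 𝔖 − (wᵢ/n) Vᵢ Vᵢᵀ, c = (1/n)·tr((𝔖 + τ Id)⁻¹), ηᵢ = (1/n) Vᵢᵀ(𝔖(i) + τ Id)⁻¹ Vᵢ − c, and Mᵢᵢ = 1 − (wᵢ/n)·Vᵢᵀ(𝔖 + τ Id)⁻¹ Vᵢ. Then (i) (1/n) Σᵢ (1 − Mᵢᵢ) = d/n − τ·c, and (ii) |(1/n) Σᵢ (1 − Mᵢᵢ) − ((1/n) Σᵢ wᵢ Mᵢᵢ)·c| ≤ (sup_i |ηᵢ|) · (1/n) Σᵢ wᵢ. -/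
/-!
Put `A = 𝔖 + τ Id` and `Bᵢ = 𝔖(i) + τ Id`, so that `A = Bᵢ + (wᵢ/n) Vᵢ Vᵢᵀ`. By Sherman–Morrison,
`Mᵢᵢ = (1 + (wᵢ/n) Vᵢᵀ Bᵢ⁻¹ Vᵢ)⁻¹ ∈ (0, 1]` and `1 - Mᵢᵢ = wᵢ Mᵢᵢ (ηᵢ + c)`. Summing
`1 - Mᵢᵢ = (wᵢ/n) Vᵢᵀ A⁻¹ Vᵢ` over `i` gives `tr (A⁻¹ 𝔖) = d - τ tr A⁻¹`, which is (i). In (ii)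
the terms in `c` cancel, leaving `(1/n) Σᵢ wᵢ Mᵢᵢ ηᵢ`, which is bounded termwise.
-/

open Matrix

namespace Matrix

section CommRing

variable {m R : Type*} [Fintype m] [CommRing R]

theorem trace_mul_vecMulVec (N : Matrix m m R) (u v : m → R) :
    trace (N * vecMulVec u v) = v ⬝ᵥ N *ᵥ u := by
  rw [mul_vecMulVec, trace_vecMulVec, dotProduct_comm]

theorem sum_mul_dotProduct_nonsing_inv_mulVec {ι : Type*} [Fintype ι] [DecidableEq m]
    {A : Matrix m m R} (hA : IsUnit A.det) {r τ : R} {w : ι → R} {v : ι → m → R}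
    (h : A = r • ∑ i, w i • vecMulVec (v i) (v i) + τ • 1) :
    ∑ i, r * w i * (v i ⬝ᵥ A⁻¹ *ᵥ v i) = Fintype.card m - τ * trace A⁻¹ := by
  have hsub : r • ∑ i, w i • vecMulVec (v i) (v i) = A - τ • 1 := by rw [h, add_sub_cancel_right]
  calc ∑ i, r * w i * (v i ⬝ᵥ A⁻¹ *ᵥ v i)
      = trace (A⁻¹ * (r • ∑ i, w i • vecMulVec (v i) (v i))) := by
        simp only [Matrix.mul_smul, Matrix.mul_sum, trace_smul, trace_sum, trace_mul_vecMulVec,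
          Finset.smul_sum, smul_eq_mul, mul_assoc]
    _ = Fintype.card m - τ * trace A⁻¹ := by
        rw [hsub, Matrix.mul_sub, nonsing_inv_mul _ hA, Matrix.mul_smul, Matrix.mul_one,
          trace_sub, trace_one, trace_smul, smul_eq_mul]

/-- Sherman–Morrison, read through the quadratic form of `v`. -/
theorem dotProduct_inv_mulVec_eq_of_eq_add_smul_vecMulVec [DecidableEq m] {A B : Matrix m m R}
    (hA : IsUnit A.det) (hB : IsUnit B.det) {α : R} {v : m → R}
    (h : A = B + α • vecMulVec v v) :
    v ⬝ᵥ A⁻¹ *ᵥ v = (1 - α * (v ⬝ᵥ A⁻¹ *ᵥ v)) * (v ⬝ᵥ B⁻¹ *ᵥ v) := by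
  have hinv : B⁻¹ = A⁻¹ + α • (B⁻¹ * vecMulVec v v * A⁻¹) :=
    calc B⁻¹ = B⁻¹ * A * A⁻¹ := by rw [Matrix.mul_assoc, mul_nonsing_inv _ hA, Matrix.mul_one]
      _ = A⁻¹ + α • (B⁻¹ * vecMulVec v v * A⁻¹) := by
        rw [h, Matrix.mul_add, nonsing_inv_mul _ hB, Matrix.mul_smul, Matrix.add_mul,
          Matrix.one_mul, Matrix.smul_mul]
  have hquad : v ⬝ᵥ B⁻¹ *ᵥ v = v ⬝ᵥ A⁻¹ *ᵥ v + α * (v ⬝ᵥ A⁻¹ *ᵥ v) * (v ⬝ᵥ B⁻¹ *ᵥ v) := by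
    conv_lhs => rw [hinv]
    rw [add_mulVec, smul_mulVec, ← mulVec_mulVec, ← mulVec_mulVec, vecMulVec_mulVec,
      op_smul_eq_smul, mulVec_smul, dotProduct_add, dotProduct_smul, dotProduct_smul,
      smul_eq_mul, smul_eq_mul]
    ring
  linear_combination -hquad

end CommRing

section Real

variable {m : Type*} [Fintype m]

theorem posSemidef_sum_smul_vecMulVec_self {ι : Type*} (s : Finset ι) (w : ι → ℝ)
    (v : ι → m → ℝ) (hw : ∀ i ∈ s, 0 ≤ w i) :
    (∑ i ∈ s, w i • vecMulVec (v i) (v i)).PosSemidef :=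
  posSemidef_sum s fun i hi => (posSemidef_vecMulVec_self_star (v i)).smul (hw i hi)

theorem posDef_smul_sum_smul_vecMulVec_self_add_smul_one {ι : Type*} [DecidableEq m]
    (s : Finset ι) {r τ : ℝ} (hr : 0 ≤ r) (hτ : 0 < τ) {w : ι → ℝ} (v : ι → m → ℝ)
    (hw : ∀ i ∈ s, 0 ≤ w i) :
    (r • ∑ i ∈ s, w i • vecMulVec (v i) (v i) + τ • 1).PosDef :=
  PosDef.posSemidef_add ((posSemidef_sum_smul_vecMulVec_self s w v hw).smul hr) (PosDef.one.smul hτ)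

/-- The number `1 - α vᵀA⁻¹v` equals `(1 + α vᵀB⁻¹v)⁻¹`. -/
theorem one_sub_mul_dotProduct_inv_mulVec_mem_Ioc [DecidableEq m] {A B : Matrix m m ℝ}
    (hB : B.PosDef) {α : ℝ} (hα : 0 ≤ α) {v : m → ℝ} (h : A = B + α • vecMulVec v v) :
    1 - α * (v ⬝ᵥ A⁻¹ *ᵥ v) ∈ Set.Ioc 0 1 := by
  have hA : A.PosDef := h ▸ hB.add_posSemidef ((posSemidef_vecMulVec_self_star v).smul hα)
  have hq : 0 ≤ v ⬝ᵥ A⁻¹ *ᵥ v := hA.posSemidef.inv.dotProduct_mulVec_nonneg v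
  have hb : 0 ≤ v ⬝ᵥ B⁻¹ *ᵥ v := hB.posSemidef.inv.dotProduct_mulVec_nonneg v
  have hSM := dotProduct_inv_mulVec_eq_of_eq_add_smul_vecMulVec
    ((isUnit_iff_isUnit_det A).mp hA.isUnit) ((isUnit_iff_isUnit_det B).mp hB.isUnit) h
  constructor
  · nlinarith [mul_nonneg hα hb]
  · nlinarith [mul_nonneg hα hq]

end Real

end Matrix

theorem abs_mul_sum_one_sub_sub_mul_le_iSup_abs_mul {ι : Type*} [Fintype ι]
    {w M η : ι → ℝ} {r : ℝ} (c : ℝ) (hr : 0 ≤ r) (hw : ∀ i, 0 ≤ w i)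
    (hM : ∀ i, M i ∈ Set.Icc 0 1) (hdecomp : ∀ i, 1 - M i = w i * M i * (η i + c)) :
    |r * ∑ i, (1 - M i) - (r * ∑ i, w i * M i) * c| ≤ (⨆ i, |η i|) * (r * ∑ i, w i) := by
  have hterm : ∀ i, |w i * M i * η i| ≤ (⨆ j, |η j|) * w i := fun i => by
    rw [abs_mul, abs_of_nonneg (mul_nonneg (hw i) (hM i).1)]
    calc w i * M i * |η i| ≤ w i * 1 * (⨆ j, |η j|) :=
          mul_le_mul (mul_le_mul_of_nonneg_left (hM i).2 (hw i))
            (le_ciSup (Finite.bddAbove_range fun j => |η j|) i) (abs_nonneg _) (by simpa using hw i)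
      _ = (⨆ j, |η j|) * w i := by ring
  calc |r * ∑ i, (1 - M i) - (r * ∑ i, w i * M i) * c| = r * |∑ i, w i * M i * η i| := by
        rw [← abs_of_nonneg hr, ← abs_mul, abs_of_nonneg hr]
        simp only [hdecomp, mul_add, Finset.sum_add_distrib, ← Finset.sum_mul]
        congr 1
        ring
    _ ≤ r * ∑ i, |w i * M i * η i| := by gcongr; exact Finset.abs_sum_le_sum_abs _ _
    _ ≤ r * ∑ i, (⨆ j, |η j|) * w i := by gcongr with i; exact hterm i
    _ = (⨆ i, |η i|) * (r * ∑ i, w i) := by rw [← Finset.mul_sum]; ring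

theorem statement9 {n d : ℕ} (V : Fin n → Fin d → ℝ) (w : Fin n → ℝ)
    (hw : ∀ i, 0 ≤ w i) (τ : ℝ) (hτ : 0 < τ)
    (S : Matrix (Fin d) (Fin d) ℝ)
    (hS : S = (1 / (n : ℝ)) • ∑ i, w i • Matrix.vecMulVec (V i) (V i))
    (Si : Fin n → Matrix (Fin d) (Fin d) ℝ)
    (hSi : ∀ i, Si i = S - (w i / (n : ℝ)) • Matrix.vecMulVec (V i) (V i))
    (c : ℝ)
    (hc : c = (1 / (n : ℝ)) * Matrix.trace ((S + τ • (1 : Matrix (Fin d) (Fin d) ℝ))⁻¹))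
    (η : Fin n → ℝ)
    (hη : ∀ i, η i = (1 / (n : ℝ)) *
      (V i ⬝ᵥ ((Si i + τ • (1 : Matrix (Fin d) (Fin d) ℝ))⁻¹.mulVec (V i))) - c)
    (Mdiag : Fin n → ℝ)
    (hM : ∀ i, Mdiag i = 1 - (w i / (n : ℝ)) *
      (V i ⬝ᵥ ((S + τ • (1 : Matrix (Fin d) (Fin d) ℝ))⁻¹.mulVec (V i)))) :
    -- (i)
    (1 / (n : ℝ)) * ∑ i, (1 - Mdiag i) = (d : ℝ) / (n : ℝ) - τ * c ∧
    -- (ii)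
    |(1 / (n : ℝ)) * ∑ i, (1 - Mdiag i) - ((1 / (n : ℝ)) * ∑ i, w i * Mdiag i) * c| ≤
      (⨆ i, |η i|) * ((1 / (n : ℝ)) * ∑ i, w i) := by
  set A := S + τ • (1 : Matrix (Fin d) (Fin d) ℝ) with hA
  have hA_eq : A = (1 / (n : ℝ)) • ∑ i, w i • vecMulVec (V i) (V i) + τ • 1 := by rw [hA, hS]
  have hA_unit : IsUnit A.det := (isUnit_iff_isUnit_det A).mp <| hA_eq ▸
    (posDef_smul_sum_smul_vecMulVec_self_add_smul_one _ (by positivity) hτ V fun j _ => hw j).isUnit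
  have hB : ∀ i, (Si i + τ • 1).PosDef := fun i => by
    rw [hSi, hS, ← Finset.sum_erase_add _ _ (Finset.mem_univ i), smul_add, smul_smul,
      one_div_mul_eq_div, add_sub_cancel_right]
    exact posDef_smul_sum_smul_vecMulVec_self_add_smul_one _ (by positivity) hτ V fun j _ => hw j
  have hupdate : ∀ i, A = (Si i + τ • 1) + (w i / n) • vecMulVec (V i) (V i) := fun i => by
    rw [hSi, hA]; abel
  have hM_mem : ∀ i, Mdiag i ∈ Set.Icc 0 1 := fun i => hM i ▸ Set.Ioc_subset_Icc_self
    (one_sub_mul_dotProduct_inv_mulVec_mem_Ioc (hB i) (div_nonneg (hw i) n.cast_nonneg) (hupdate i))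
  have hdecomp : ∀ i, 1 - Mdiag i = w i * Mdiag i * (η i + c) := fun i => by
    have hSM := dotProduct_inv_mulVec_eq_of_eq_add_smul_vecMulVec hA_unit
      ((isUnit_iff_isUnit_det _).mp (hB i).isUnit) (hupdate i)
    rw [hη i, hM i]
    linear_combination (w i / n) * hSM
  have htrace : ∑ i, (1 - Mdiag i) = d - τ * trace A⁻¹ := by
    have h := sum_mul_dotProduct_nonsing_inv_mulVec hA_unit hA_eq
    rw [Fintype.card_fin] at h
    rw [← h]
    exact Finset.sum_congr rfl fun i _ => by rw [hM i]; ring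
  exact ⟨by rw [htrace, hc]; ring,
    abs_mul_sum_one_sub_sub_mul_le_iSup_abs_mul c (by positivity) hw hM_mem hdecomp⟩
end

section
/- Let V₁, …, Vₙ ∈ ℝᵈ, w₁, …, wₙ ≥ 0, τ > 0, 𝔖 = (1/n) Σⱼ wⱼ Vⱼ Vⱼᵀ, and 𝔖(i) = 𝔖 − (wᵢ/n) Vᵢ Vᵢᵀ. Then 0 ≤ tr((𝔖(i) + τ Id)⁻¹) − tr((𝔖 + τ Id)⁻¹) ≤ 1/τ. -/
noncomputable section

open scoped BigOperators
open Matrix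

/-!
Write `A = 𝔖(i) + τ Id`, `c = wᵢ / n` and `x = A⁻¹ Vᵢ`, so that `𝔖 + τ Id = A + c Vᵢ Vᵢᵀ`.
By the Sherman–Morrison formula the difference of traces is `c ‖x‖² / (1 + c Vᵢᵀ x)`, which is
nonnegative. Since `Vᵢᵀ x = xᵀ A x ≥ τ ‖x‖²`, it is at most `c ‖x‖² / (1 + c τ ‖x‖²) ≤ 1 / τ`.
-/

namespace Matrix

variable {n K : Type*} [Fintype n] [DecidableEq n] [Field K]

theorem inv_add_smul_vecMulVec {A : Matrix n n K} (hA : IsUnit A.det) {c : K} {u v : n → K}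
    (h : 1 + c * (v ⬝ᵥ A⁻¹ *ᵥ u) ≠ 0) :
    (A + c • vecMulVec u v)⁻¹ =
      A⁻¹ - (c / (1 + c * (v ⬝ᵥ A⁻¹ *ᵥ u))) • vecMulVec (A⁻¹ *ᵥ u) (v ᵥ* A⁻¹) := by
  set q := v ⬝ᵥ A⁻¹ *ᵥ u
  set k := c / (1 + c * q)
  have hA_mul : A * vecMulVec (A⁻¹ *ᵥ u) (v ᵥ* A⁻¹) = vecMulVec u (v ᵥ* A⁻¹) := by
    rw [mul_vecMulVec, mulVec_mulVec, mul_nonsing_inv _ hA, one_mulVec]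
  have hrank_mul :
      vecMulVec u v * vecMulVec (A⁻¹ *ᵥ u) (v ᵥ* A⁻¹) = q • vecMulVec u (v ᵥ* A⁻¹) := by
    rw [vecMulVec_mul_vecMulVec, vecMulVec_smul]
  have hk : c - k - c * k * q = 0 := by
    simp only [k]; field_simp; ring
  refine inv_eq_right_inv ?_
  rw [add_mul, mul_sub, mul_sub, mul_nonsing_inv _ hA, Matrix.mul_smul, hA_mul, Matrix.smul_mul,
    Matrix.smul_mul, Matrix.mul_smul, hrank_mul, vecMulVec_mul, smul_smul]
  linear_combination (norm := module) hk • vecMulVec u (v ᵥ* A⁻¹)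

theorem trace_inv_sub_trace_inv_add_smul_vecMulVec {A : Matrix n n K} (hA : IsUnit A.det)
    {c : K} {u v : n → K} (h : 1 + c * (v ⬝ᵥ A⁻¹ *ᵥ u) ≠ 0) :
    trace A⁻¹ - trace (A + c • vecMulVec u v)⁻¹ =
      c / (1 + c * (v ⬝ᵥ A⁻¹ *ᵥ u)) * ((A⁻¹ *ᵥ u) ⬝ᵥ (v ᵥ* A⁻¹)) := by
  rw [inv_add_smul_vecMulVec hA h, trace_sub, trace_smul, trace_vecMulVec, smul_eq_mul,
    sub_sub_cancel]

end Matrix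

namespace Matrix.PosSemidef

variable {n : Type*} [Fintype n] [DecidableEq n]

theorem mul_dotProduct_self_le_dotProduct_add_smul_one_mulVec {T : Matrix n n ℝ}
    (hT : T.PosSemidef) (τ : ℝ) (x : n → ℝ) :
    τ * (x ⬝ᵥ x) ≤ x ⬝ᵥ (T + τ • 1) *ᵥ x := by
  have := hT.dotProduct_mulVec_nonneg x
  rw [star_trivial] at this
  rw [add_mulVec, dotProduct_add, smul_mulVec, one_mulVec, dotProduct_smul, smul_eq_mul]
  linarith

theorem trace_inv_sub_trace_inv_add_smul_vecMulVec_self {T : Matrix n n ℝ} (hT : T.PosSemidef)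
    {τ c : ℝ} (hτ : 0 < τ) (hc : 0 ≤ c) (v : n → ℝ) :
    0 ≤ trace (T + τ • 1)⁻¹ - trace (T + τ • 1 + c • vecMulVec v v)⁻¹ ∧
      trace (T + τ • 1)⁻¹ - trace (T + τ • 1 + c • vecMulVec v v)⁻¹ ≤ 1 / τ := by
  set A := T + τ • (1 : Matrix n n ℝ)
  have hA : A.PosDef := PosDef.posSemidef_add hT (PosDef.one.smul hτ)
  have hA_det : IsUnit A.det := (isUnit_iff_isUnit_det A).mp hA.isUnit
  have hA_inv_symm : v ᵥ* A⁻¹ = A⁻¹ *ᵥ v := by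
    have := hA.inv.isHermitian
    rw [isHermitian_iff_isSymm] at this
    rw [← vecMul_transpose, this.eq]
  set x := A⁻¹ *ᵥ v
  have hq : τ * (x ⬝ᵥ x) ≤ v ⬝ᵥ x := by
    have hAx : A *ᵥ x = v := by rw [mulVec_mulVec, mul_nonsing_inv _ hA_det, one_mulVec]
    calc τ * (x ⬝ᵥ x)
        ≤ x ⬝ᵥ A *ᵥ x := hT.mul_dotProduct_self_le_dotProduct_add_smul_one_mulVec τ x
      _ = v ⬝ᵥ x := by rw [hAx, dotProduct_comm]
  have hr : 0 ≤ x ⬝ᵥ x := by simpa using dotProduct_star_self_nonneg x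
  have hden : 0 < 1 + c * (v ⬝ᵥ x) := by nlinarith [mul_nonneg hc (mul_nonneg hτ.le hr)]
  rw [trace_inv_sub_trace_inv_add_smul_vecMulVec hA_det hden.ne', hA_inv_symm]
  refine ⟨by positivity, ?_⟩
  rw [div_mul_eq_mul_div, div_le_div_iff₀ hden hτ]
  nlinarith [mul_le_mul_of_nonneg_left hq hc]

end Matrix.PosSemidef

theorem Matrix.posSemidef_sum_smul_vecMulVec_self_s11 {ι n : Type*} [Fintype n] (s : Finset ι)
    {w : ι → ℝ} (hw : ∀ j ∈ s, 0 ≤ w j) (V : ι → n → ℝ) :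
    (∑ j ∈ s, w j • vecMulVec (V j) (V j)).PosSemidef :=
  posSemidef_sum s fun j hj => by
    simpa using (posSemidef_vecMulVec_self_star (V j)).smul (hw j hj)

theorem statement11 {n d : ℕ} (V : Fin n → Fin d → ℝ) (w : Fin n → ℝ)
    (hw : ∀ i, 0 ≤ w i) (τ : ℝ) (hτ : 0 < τ)
    (S : Matrix (Fin d) (Fin d) ℝ)
    (hS : S = (1 / (n : ℝ)) • ∑ j, w j • Matrix.vecMulVec (V j) (V j))
    (Si : Fin n → Matrix (Fin d) (Fin d) ℝ)
    (hSi : ∀ i, Si i = S - (w i / (n : ℝ)) • Matrix.vecMulVec (V i) (V i)) :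
    ∀ i,
      0 ≤ Matrix.trace ((Si i + τ • (1 : Matrix (Fin d) (Fin d) ℝ))⁻¹) -
          Matrix.trace ((S + τ • (1 : Matrix (Fin d) (Fin d) ℝ))⁻¹) ∧
      Matrix.trace ((Si i + τ • (1 : Matrix (Fin d) (Fin d) ℝ))⁻¹) -
          Matrix.trace ((S + τ • (1 : Matrix (Fin d) (Fin d) ℝ))⁻¹) ≤ 1 / τ := by
  intro i
  have hSi_eq :
      Si i = (1 / (n : ℝ)) • ∑ j ∈ Finset.univ.erase i, w j • vecMulVec (V j) (V j) := by
    rw [hSi, hS, ← Finset.add_sum_erase _ _ (Finset.mem_univ i)]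
    module
  have hSi_psd : (Si i).PosSemidef := by
    rw [hSi_eq]
    exact (posSemidef_sum_smul_vecMulVec_self_s11 _ (fun j _ => hw j) V).smul (by positivity)
  have hS_eq : S + τ • 1 = Si i + τ • 1 + (w i / n) • vecMulVec (V i) (V i) := by
    rw [hSi]; abel
  rw [hS_eq]
  exact hSi_psd.trace_inv_sub_trace_inv_add_smul_vecMulVec_self hτ
    (div_nonneg (hw i) n.cast_nonneg) (V i)
end
end

section
/- Suppose sgn(ψ(x)) = sgn(x) for all x ≠ 0 and let c > 0. Then (i) prox_c(ρ)(0) = 0; (ii) for all x, |ψ(prox_c(ρ)(x))| ≤ |ψ(x)|; and (iii) for all x, |ψ(prox_c(ρ)(x))| ≤ |x|/c. -/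
noncomputable section

theorem statement12 (ρ : ℝ → ℝ) (hρconv : ConvexOn ℝ Set.univ ρ)
    (hρdiff : Differentiable ℝ ρ)
    -- ψ = ρ' is nondecreasing
    (hmono : Monotone (deriv ρ))
    -- sgn(ψ(x)) = sgn(x) for x ≠ 0
    (hsgn : ∀ x : ℝ, x ≠ 0 → Real.sign (deriv ρ x) = Real.sign x)
    (c : ℝ) (hc : 0 < c)
    -- P = prox_c(ρ) : the unique map with P x + c ψ(P x) = x
    (P : ℝ → ℝ)
    (hP : ∀ x, P x + c * deriv ρ (P x) = x)
    -- P is 1-Lipschitz (contractive)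
    (hPlip : LipschitzWith 1 P) :
    -- (i) prox_c(ρ)(0) = 0
    P 0 = 0 ∧
    -- (ii) |ψ(prox_c(ρ)(x))| ≤ |ψ(x)|
    (∀ x, |deriv ρ (P x)| ≤ |deriv ρ x|) ∧
    -- (iii) |ψ(prox_c(ρ)(x))| ≤ |x|/c
    (∀ x, |deriv ρ (P x)| ≤ |x| / c) := by
  set ψ := deriv ρ with hψ
  have hpos : ∀ y : ℝ, 0 < y → 0 < ψ y := by
    intro y hy
    have h := hsgn y hy.ne'
    rw [Real.sign_of_pos hy] at h
    by_contra hle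
    push_neg at hle
    rcases lt_or_eq_of_le hle with h1 | h1
    · rw [Real.sign_of_neg h1] at h; norm_num at h
    · rw [h1, Real.sign_zero] at h; norm_num at h
  have hneg : ∀ y : ℝ, y < 0 → ψ y < 0 := by
    intro y hy
    have h := hsgn y hy.ne
    rw [Real.sign_of_neg hy] at h
    by_contra hle
    push_neg at hle
    rcases lt_or_eq_of_le hle with h1 | h1
    · rw [Real.sign_of_pos h1] at h; norm_num at h
    · rw [← h1, Real.sign_zero] at h; norm_num at h
  have hP0 : P 0 = 0 := by
    rcases lt_trichotomy (P 0) 0 with h | h | h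
    · have := hP 0
      nlinarith [hneg (P 0) h]
    · exact h
    · have := hP 0
      nlinarith [hpos (P 0) h]
  have hψ0 : ψ 0 = 0 := by
    have := hP 0
    rw [hP0] at this
    nlinarith
  have hbet : ∀ x : ℝ, 0 ≤ x → 0 ≤ P x ∧ P x ≤ x := by
    intro x hx
    constructor
    · by_contra h
      push_neg at h
      have := hP x
      nlinarith [hneg (P x) h]
    · by_contra h
      push_neg at h
      have hpx : 0 < P x := lt_of_le_of_lt hx h
      have := hP x
      nlinarith [hpos (P x) hpx]
  have hbet' : ∀ x : ℝ, x ≤ 0 → x ≤ P x ∧ P x ≤ 0 := by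
    intro x hx
    constructor
    · by_contra h
      push_neg at h
      have hpx : P x < 0 := lt_of_lt_of_le h hx
      have := hP x
      nlinarith [hneg (P x) hpx]
    · by_contra h
      push_neg at h
      have := hP x
      nlinarith [hpos (P x) h]
  refine ⟨hP0, ?_, ?_⟩
  · intro x
    rcases le_total 0 x with hx | hx
    · obtain ⟨h1, h2⟩ := hbet x hx
      have g1 : ψ 0 ≤ ψ (P x) := hmono h1
      have g2 : ψ (P x) ≤ ψ x := hmono h2
      rw [hψ0] at g1
      rw [abs_of_nonneg g1, abs_of_nonneg (le_trans g1 g2)]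
      exact g2
    · obtain ⟨h1, h2⟩ := hbet' x hx
      have g1 : ψ x ≤ ψ (P x) := hmono h1
      have g2 : ψ (P x) ≤ ψ 0 := hmono h2
      rw [hψ0] at g2
      rw [abs_of_nonpos g2, abs_of_nonpos (le_trans g1 g2)]
      linarith
  · intro x
    rw [le_div_iff₀ hc]
    rcases le_total 0 x with hx | hx
    · obtain ⟨h1, h2⟩ := hbet x hx
      have g1 : ψ 0 ≤ ψ (P x) := hmono h1
      rw [hψ0] at g1
      have := hP x
      rw [abs_of_nonneg g1, abs_of_nonneg hx]
      nlinarith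
    · obtain ⟨h1, h2⟩ := hbet' x hx
      have g2 : ψ (P x) ≤ ψ 0 := hmono h2
      rw [hψ0] at g2
      have := hP x
      rw [abs_of_nonpos g2, abs_of_nonpos hx]
      nlinarith
end
end

section
/- Let ρ be twice differentiable and convex, ψ = ρ', and fix x ∈ ℝ. Then for c > 0, the function c ↦ ρ(prox_c(ρ)(x)) is differentiable with derivative ∂/∂c ρ(prox_c(ρ)(x)) = −ψ²(prox_c(ρ)(x)) / (1 + c·ψ'(prox_c(ρ)(x))). In particular, c ↦ ρ(prox_c(ρ)(x)) is nonincreasing in c on (0, ∞). -/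
/-! Differentiating the resolvent equation `y + c ψ(y) = x` in `c` gives
`y' (1 + c ψ'(y)) = -ψ(y)`, and the chain rule then gives `(ρ ∘ y)' = ψ(y) y'`, which is `≤ 0`
because `ψ' ≥ 0`. To justify the differentiation without an implicit function theorem, write
`ψ(y) - ψ(y₀) = S(y) (y - y₀)` with a nonnegative slope `S` continuous at `y₀`: the resolvent
equation becomes `(y(c) - y₀) (1 + c S(y(c))) = -(c - c₀) ψ(y₀)`, which exhibits the difference
quotient of `y` explicitly. Continuity of `y` comes from the monotonicity of `ψ`, which makes
`id + c ψ` expanding. -/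

open Topology Set

variable {ψ : ℝ → ℝ}

lemma Monotone.abs_sub_le_abs_add_mul_sub (hψ : Monotone ψ) {c : ℝ} (hc : 0 ≤ c) (a b : ℝ) :
    |a - b| ≤ |a - b + c * (ψ a - ψ b)| := by
  have hsign : 0 ≤ (a - b) * (ψ a - ψ b) := by
    rcases le_total b a with hba | hab
    · exact mul_nonneg (sub_nonneg.2 hba) (sub_nonneg.2 (hψ hba))
    · exact mul_nonneg_of_nonpos_of_nonpos (sub_nonpos.2 hab) (sub_nonpos.2 (hψ hab))
  rw [← sq_le_sq]
  nlinarith [mul_nonneg hc hsign, sq_nonneg (c * (ψ a - ψ b))]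

lemma Monotone.exists_slope_nonneg_continuousAt {ψ' y₀ : ℝ} (hψ : Monotone ψ)
    (hd : HasDerivAt ψ ψ' y₀) :
    ∃ S : ℝ → ℝ, ContinuousAt S y₀ ∧ S y₀ = ψ' ∧ (∀ y, 0 ≤ S y) ∧
      ∀ y, ψ y - ψ y₀ = S y * (y - y₀) := by
  refine ⟨Function.update (slope ψ y₀) y₀ ψ',
    continuousAt_update_same.2 (hasDerivAt_iff_tendsto_slope.1 hd),
    Function.update_self .., fun y => ?_, fun y => ?_⟩
  · rcases eq_or_ne y y₀ with rfl | hy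
    · simpa using hd.nonneg_of_monotone hψ
    · simpa [Function.update_of_ne hy] using (hψ.monotoneOn univ).slope_nonneg trivial trivial
  · rcases eq_or_ne y y₀ with rfl | hy
    · simp
    · rw [Function.update_of_ne hy, mul_comm, ← smul_eq_mul, sub_smul_slope, vsub_eq_sub]

section Resolvent

variable {x : ℝ} {P : ℝ → ℝ} {c₀ : ℝ}

lemma abs_resolvent_sub_le (hψ : Monotone ψ) (hP : ∀ c, 0 < c → P c + c * ψ (P c) = x)
    {c : ℝ} (hc : 0 < c) (hc₀ : 0 < c₀) :
    |P c - P c₀| ≤ |ψ (P c₀)| * |c - c₀| := by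
  have hdiff : P c - P c₀ + c * (ψ (P c) - ψ (P c₀)) = -((c - c₀) * ψ (P c₀)) := by
    linarith [hP c hc, hP c₀ hc₀]
  calc |P c - P c₀| ≤ |P c - P c₀ + c * (ψ (P c) - ψ (P c₀))| :=
        hψ.abs_sub_le_abs_add_mul_sub hc.le _ _
    _ = |ψ (P c₀)| * |c - c₀| := by rw [hdiff, abs_neg, abs_mul, mul_comm]

lemma continuousAt_resolvent (hψ : Monotone ψ) (hP : ∀ c, 0 < c → P c + c * ψ (P c) = x)
    (hc₀ : 0 < c₀) : ContinuousAt P c₀ := by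
  refine continuousAt_of_locally_lipschitz hc₀ |ψ (P c₀)| fun c hc => ?_
  have hcpos : 0 < c := by
    rw [Real.dist_eq] at hc
    linarith [neg_abs_le (c - c₀)]
  simpa only [Real.dist_eq] using abs_resolvent_sub_le hψ hP hcpos hc₀

lemma hasDerivAt_resolvent {ψ' : ℝ} (hψ : Monotone ψ)
    (hP : ∀ c, 0 < c → P c + c * ψ (P c) = x) (hc₀ : 0 < c₀) (hd : HasDerivAt ψ ψ' (P c₀)) :
    HasDerivAt P (-ψ (P c₀) / (1 + c₀ * ψ')) c₀ := by
  obtain ⟨S, hS, hSy₀, hS_nonneg, hψS⟩ := hψ.exists_slope_nonneg_continuousAt hd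
  have hden : ∀ c, 0 < c → 0 < 1 + c * S (P c) := fun c hc => by
    linarith [mul_nonneg hc.le (hS_nonneg (P c))]
  have hquot : ContinuousAt (fun c => -ψ (P c₀) / (1 + c * S (P c))) c₀ :=
    continuousAt_const.div (continuousAt_const.add
      (continuousAt_id.mul (hS.comp (continuousAt_resolvent hψ hP hc₀)))) (hden c₀ hc₀).ne'
  have hslope : ∀ᶠ c in 𝓝[≠] c₀, -ψ (P c₀) / (1 + c * S (P c)) = slope P c₀ c := by
    filter_upwards [nhdsWithin_le_nhds (Ioi_mem_nhds hc₀), self_mem_nhdsWithin]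
      with c (hc : 0 < c) (hne : c ≠ c₀)
    rw [slope_def_field, div_eq_div_iff (hden c hc).ne' (sub_ne_zero.2 hne)]
    linear_combination hP c₀ hc₀ - hP c hc + c * hψS (P c)
  rw [hasDerivAt_iff_tendsto_slope, ← hSy₀]
  exact (hquot.tendsto.mono_left nhdsWithin_le_nhds).congr' hslope

end Resolvent

theorem statement13 (ρ : ℝ → ℝ) (hρconv : ConvexOn ℝ Set.univ ρ)
    (hρdiff : Differentiable ℝ ρ) (hρdiff2 : Differentiable ℝ (deriv ρ))
    (x : ℝ)
    -- P c = prox_c(ρ)(x) : the unique y with y + c ψ(y) = x, for c > 0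
    (P : ℝ → ℝ)
    (hP : ∀ c : ℝ, 0 < c → P c + c * deriv ρ (P c) = x) :
    -- the derivative formula in c
    (∀ c : ℝ, 0 < c →
      HasDerivAt (fun c => ρ (P c))
        (-(deriv ρ (P c)) ^ 2 / (1 + c * deriv (deriv ρ) (P c))) c) ∧
    -- c ↦ ρ(prox_c(ρ)(x)) is nonincreasing on (0, ∞)
    AntitoneOn (fun c => ρ (P c)) (Set.Ioi 0) := by
  have hψ : Monotone (deriv ρ) := fun a b hab =>
    hρconv.monotoneOn_deriv (fun y _ => hρdiff y) trivial trivial hab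
  have hderiv : ∀ c : ℝ, 0 < c → HasDerivAt (fun c => ρ (P c))
      (-(deriv ρ (P c)) ^ 2 / (1 + c * deriv (deriv ρ) (P c))) c := fun c hc =>
    ((hρdiff (P c)).hasDerivAt.comp c
      (hasDerivAt_resolvent hψ hP hc (hρdiff2 (P c)).hasDerivAt)).congr_deriv (by ring)
  refine ⟨hderiv, antitoneOn_of_hasDerivWithinAt_nonpos (convex_Ioi 0)
    (fun c hc => (hderiv c hc).continuousAt.continuousWithinAt)
    (fun c hc => (hderiv c (interior_Ioi.subset hc)).hasDerivWithinAt) fun c hc => ?_⟩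
  rw [interior_Ioi] at hc
  exact div_nonpos_of_nonpos_of_nonneg (neg_nonpos.2 (sq_nonneg _))
    (by linarith [mul_nonneg hc.le (hψ.deriv_nonneg (x := P c))])
end

section
/- Let ρ be twice differentiable and convex with ψ = ρ'. For any fixed u ∈ ℝ, the function x ↦ [x·ψ(prox_x(ρ)(u))]² is nondecreasing on (0, ∞). -/
noncomputable section

theorem statement15 (ρ : ℝ → ℝ) (hρconv : ConvexOn ℝ Set.univ ρ)
    (hρdiff : Differentiable ℝ ρ) (hρdiff2 : Differentiable ℝ (deriv ρ))
    (u : ℝ)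
    -- P x = prox_x(ρ)(u) : the unique y with y + x ψ(y) = u, for x > 0
    (P : ℝ → ℝ)
    (hP : ∀ x : ℝ, 0 < x → P x + x * deriv ρ (P x) = u) :
    MonotoneOn (fun x => (x * deriv ρ (P x)) ^ 2) (Set.Ioi 0) := by
  have hmono : Monotone (deriv ρ) := by
    have := hρconv.monotoneOn_deriv (fun x _ => hρdiff x)
    intro a b hab
    exact this (Set.mem_univ a) (Set.mem_univ b) hab
  intro a ha b hb hab
  simp only [Set.mem_Ioi] at ha hb
  have hea := hP a ha
  have heb := hP b hb
  set ψ := deriv ρ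
  have ha' : a * ψ (P a) = u - P a := by linarith
  have hb' : b * ψ (P b) = u - P b := by linarith
  simp only
  rcases le_or_gt 0 (ψ (P a)) with hsa | hsa
  · -- u - P a ≥ 0; show P b ≤ P a
    have hPa : P a ≤ u := by nlinarith
    have hPb : P b ≤ P a := by
      by_contra h
      push_neg at h
      have h1 : ψ (P a) ≤ ψ (P b) := hmono h.le
      have h2 : 0 ≤ ψ (P b) := le_trans hsa h1
      nlinarith
    rw [ha', hb']
    have h0 : 0 ≤ u - P a := by linarith
    nlinarith
  · -- ψ (P a) < 0, u - P a < 0; show P b ≥ P a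
    have hPa : u < P a := by nlinarith
    have hPb : P a ≤ P b := by
      by_contra h
      push_neg at h
      have h1 : ψ (P b) ≤ ψ (P a) := hmono h.le
      nlinarith
    rw [ha', hb']
    nlinarith
end
end

section
/- Let W be a real random variable with a continuously differentiable density f satisfying sgn(f'(t)) = −sgn(t) for t ≠ 0 and lim_{|t|→∞} t·f(t) = 0. Suppose sgn(ψ(x)) = sgn(x) for x ≠ 0. Let κ > 0 and τ > 0, and define F : [0, ∞) → ℝ by F(x) = κ − τx − 1 + E[(prox_x(ρ))'(W)], where (prox_x(ρ))'(t) = 1/(1 + x·ψ'(prox_x(ρ)(t))). Then F is strictly decreasing on [0, ∞), F(0) = κ, and lim_{x→∞} F(x) = −∞; consequently the equation F(x) = 0 has a unique solution in (0, ∞). -/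
/-!
Write `p_x = prox_x(ρ)`, so that `p_x' = 1 / (1 + x ψ'(p_x))` and the expectation in `F(x)` is
`∫ p_x' f`. For `x ≤ y`, integration by parts gives `∫ (p_x' - p_y') f = -∫ (p_x - p_y) f'`, the
boundary terms vanishing because `|p_x(t) - p_y(t)| ≤ |t|` and `t f(t) → 0`. Since `ψ` has the sign
of its argument, `p_x(t) - p_y(t)` has the sign of `t`, whereas `f'(t)` has the opposite sign; hence
the expectation is antitone in `x` and `-τx` makes `F` strictly decreasing. As `0 < p_x' ≤ 1`, `F`
is continuous by dominated convergence and `F(x) ≤ κ - τx`, so with `F(0) = κ > 0` the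
intermediate value theorem gives the unique zero.
-/

noncomputable section

open MeasureTheory Filter

/-- `F(x) = κ - τx - 1 + E[(prox_x(ρ))'(W)]`, where `W` has density `f` and
`(prox_x(ρ))'(t) = 1/(1 + x ψ'(prox_x(ρ)(t)))`. -/
def Ffun (ρ : ℝ → ℝ) (κ τ : ℝ) (P : ℝ → ℝ → ℝ) (f : ℝ → ℝ) (x : ℝ) : ℝ :=
  κ - τ * x - 1 + ∫ t : ℝ, (1 + x * deriv (deriv ρ) (P x t))⁻¹ * f t

open Set Topology

theorem eq_zero_of_sign_eq_sign {g : ℝ → ℝ} (hg : ContinuousAt g 0)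
    (h : ∀ t, t ≠ 0 → Real.sign (g t) = Real.sign t) : g 0 = 0 := by
  have hprod : ∀ t, t ≠ 0 → 0 ≤ Real.sign t * g t := fun t ht =>
    h t ht ▸ Real.sign_mul_nonneg (g t)
  apply le_antisymm
  · refine le_of_tendsto (hg.tendsto.mono_left (nhdsWithin_le_nhds (s := Iio 0))) ?_
    filter_upwards [self_mem_nhdsWithin] with t (ht : t < 0)
    simpa [Real.sign_of_neg ht] using hprod t ht.ne
  · refine ge_of_tendsto (hg.tendsto.mono_left (nhdsWithin_le_nhds (s := Ioi 0))) ?_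
    filter_upwards [self_mem_nhdsWithin] with t (ht : 0 < t)
    simpa [Real.sign_of_pos ht] using hprod t ht.ne'

theorem mul_nonpos_of_sign_eq_neg_sign {a d t : ℝ} (ha : t ≠ 0 → Real.sign a = -Real.sign t)
    (hd : d ∈ uIcc 0 t) : a * d ≤ 0 := by
  have hprod : t ≠ 0 → 0 ≤ -Real.sign t * a := fun ht => ha ht ▸ Real.sign_mul_nonneg a
  rcases lt_trichotomy t 0 with ht | rfl | ht
  · have hd' : d ≤ 0 := by rw [uIcc_of_ge ht.le] at hd; exact hd.2
    have ha' : 0 ≤ a := by simpa [Real.sign_of_neg ht] using hprod ht.ne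
    exact mul_nonpos_of_nonneg_of_nonpos ha' hd'
  · simp_all
  · have hd' : 0 ≤ d := by rw [uIcc_of_le ht.le] at hd; exact hd.1
    have ha' : a ≤ 0 := by simpa [Real.sign_of_pos ht] using hprod ht.ne'
    exact mul_nonpos_of_nonpos_of_nonneg ha' hd'

theorem tendsto_mul_zero_of_mem_uIcc {u v : ℝ → ℝ} {l : Filter ℝ}
    (hu : Tendsto (fun t => t * u t) l (𝓝 0)) (hv : ∀ t, v t ∈ uIcc 0 t) :
    Tendsto (fun t => u t * v t) l (𝓝 0) := by
  refine (Asymptotics.IsBigO.of_bound 1 (Eventually.of_forall fun t => ?_)).trans_tendsto hu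
  have hvt : |v t| ≤ |t| := by simpa using abs_sub_left_of_mem_uIcc (hv t)
  simpa [abs_mul, mul_comm] using mul_le_mul_of_nonneg_left hvt (abs_nonneg (u t))

theorem integral_mul_deriv_nonneg_of_deriv_mul_nonpos {u v u' v' : ℝ → ℝ}
    (hu : ∀ t, HasDerivAt u (u' t) t) (hv : ∀ t, HasDerivAt v (v' t) t)
    (hu' : Continuous u') (hv' : Continuous v') (huv' : Integrable (fun t => u t * v' t))
    (hu'v : ∀ t, u' t * v t ≤ 0)
    (htop : Tendsto (fun t => u t * v t) atTop (𝓝 0))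
    (hbot : Tendsto (fun t => u t * v t) atBot (𝓝 0)) :
    0 ≤ ∫ t, u t * v' t := by
  have hboundary : Tendsto (fun R => u R * v R - u (-R) * v (-R)) atTop (𝓝 0) := by
    simpa using htop.sub (hbot.comp tendsto_neg_atTop_atBot)
  refine le_of_tendsto_of_tendsto hboundary
    (intervalIntegral_tendsto_integral huv' tendsto_neg_atTop_atBot tendsto_id) ?_
  filter_upwards [eventually_ge_atTop 0] with R hR
  have hrest : 0 ≤ ∫ t in -R..R, -(u' t * v t) :=
    intervalIntegral.integral_nonneg (by linarith) fun t _ => neg_nonneg.2 (hu'v t)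
  rw [id, intervalIntegral.integral_mul_deriv_eq_deriv_mul (fun t _ => hu t) (fun t _ => hv t)
    (hu'.intervalIntegrable _ _) (hv'.intervalIntegrable _ _)]
  rw [intervalIntegral.integral_neg] at hrest
  linarith

theorem StrictAntiOn.existsUnique_mem_Ioi_eq {F : ℝ → ℝ} {a c : ℝ}
    (hanti : StrictAntiOn F (Ici a)) (hcont : ContinuousOn F (Ici a)) (hc : c < F a)
    (hbot : Tendsto F atTop atBot) : ∃! x, x ∈ Ioi a ∧ F x = c := by
  obtain ⟨x, hx, hFx⟩ := intermediate_value_Ici' hcont hbot (mem_Iic.2 hc.le)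
  have hax : a < x := lt_of_le_of_ne hx (by rintro rfl; exact hc.ne' hFx)
  exact ⟨x, ⟨hax, hFx⟩, fun y ⟨hy, hFy⟩ => hanti.injOn (mem_Ici.2 hy.le) hx (hFy.trans hFx.symm)⟩

section ProxEquation

variable {ψ : ℝ → ℝ} {x x' y y' t : ℝ}

theorem prox_mem_Icc_of_nonneg (hψ : Monotone ψ) (hψ0 : ψ 0 = 0) (hx : 0 ≤ x)
    (hy : y + x * ψ y = t) (ht : 0 ≤ t) : y ∈ Icc 0 t := by
  have hy0 : 0 ≤ y := by
    by_contra! hneg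
    have : ψ y ≤ 0 := hψ0 ▸ hψ hneg.le
    nlinarith [mul_nonpos_of_nonneg_of_nonpos hx this]
  have : 0 ≤ ψ y := hψ0 ▸ hψ hy0
  exact ⟨hy0, by nlinarith [mul_nonneg hx this]⟩

theorem prox_anti_of_nonneg (hψ : Monotone ψ) (hψ0 : ψ 0 = 0) (hx : 0 ≤ x) (hxx' : x ≤ x')
    (hy : y + x * ψ y = t) (hy' : y' + x' * ψ y' = t) (ht : 0 ≤ t) : y' ≤ y := by
  by_contra! hlt
  have h0 : 0 ≤ ψ y := hψ0 ▸ hψ (prox_mem_Icc_of_nonneg hψ hψ0 hx hy ht).1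
  have : x * ψ y ≤ x' * ψ y' := mul_le_mul hxx' (hψ hlt.le) h0 (hx.trans hxx')
  linarith

theorem prox_sub_mem_Icc_of_nonneg (hψ : Monotone ψ) (hψ0 : ψ 0 = 0) (hx : 0 ≤ x)
    (hxx' : x ≤ x') (hy : y + x * ψ y = t) (hy' : y' + x' * ψ y' = t) (ht : 0 ≤ t) :
    y - y' ∈ Icc 0 t :=
  ⟨sub_nonneg.2 (prox_anti_of_nonneg hψ hψ0 hx hxx' hy hy' ht), by
    linarith [(prox_mem_Icc_of_nonneg hψ hψ0 hx hy ht).2,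
      (prox_mem_Icc_of_nonneg hψ hψ0 (hx.trans hxx') hy' ht).1]⟩

theorem abs_prox_sub_le_of_nonneg (hψ : Monotone ψ) (hψ0 : ψ 0 = 0) (hx : 0 ≤ x)
    (hxx' : x ≤ x') (hy : y + x * ψ y = t) (hy' : y' + x' * ψ y' = t) (ht : 0 ≤ t) :
    |y - y'| ≤ (x' - x) * |ψ t| := by
  have hyt : y ≤ t := (prox_mem_Icc_of_nonneg hψ hψ0 hx hy ht).2
  have hy'y : y' ≤ y := prox_anti_of_nonneg hψ hψ0 hx hxx' hy hy' ht
  rw [abs_of_nonneg (sub_nonneg.2 hy'y), abs_of_nonneg (hψ0 ▸ hψ ht)]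
  calc y - y' = x' * ψ y' - x * ψ y := by linarith
    _ ≤ x' * ψ y - x * ψ y := by gcongr; exacts [hx.trans hxx', hψ hy'y]
    _ = (x' - x) * ψ y := by ring
    _ ≤ (x' - x) * ψ t := mul_le_mul_of_nonneg_left (hψ hyt) (sub_nonneg.2 hxx')

/- The case `t ≤ 0` of the next two lemmas is the case `0 ≤ t` for the reflected map
`z ↦ -ψ (-z)`, which sends the solutions `y, y'` for `t` to the solutions `-y, -y'` for `-t`. -/

theorem prox_sub_mem_uIcc (hψ : Monotone ψ) (hψ0 : ψ 0 = 0) (hx : 0 ≤ x) (hxx' : x ≤ x')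
    (hy : y + x * ψ y = t) (hy' : y' + x' * ψ y' = t) : y - y' ∈ uIcc 0 t := by
  rcases le_total 0 t with ht | ht
  · exact Icc_subset_uIcc (prox_sub_mem_Icc_of_nonneg hψ hψ0 hx hxx' hy hy' ht)
  · have h := prox_sub_mem_Icc_of_nonneg (ψ := fun z => -ψ (-z)) (y := -y) (y' := -y')
      (fun a b hab => neg_le_neg (hψ (neg_le_neg hab))) (by simp [hψ0]) hx hxx'
      (by rw [neg_neg]; linarith) (by rw [neg_neg]; linarith) (neg_nonneg.2 ht)
    exact Icc_subset_uIcc' ⟨by linarith [h.2], by linarith [h.1]⟩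

theorem abs_prox_sub_le (hψ : Monotone ψ) (hψ0 : ψ 0 = 0) (hx : 0 ≤ x) (hxx' : x ≤ x')
    (hy : y + x * ψ y = t) (hy' : y' + x' * ψ y' = t) : |y - y'| ≤ (x' - x) * |ψ t| := by
  rcases le_total 0 t with ht | ht
  · exact abs_prox_sub_le_of_nonneg hψ hψ0 hx hxx' hy hy' ht
  · have h := abs_prox_sub_le_of_nonneg (ψ := fun z => -ψ (-z)) (y := -y) (y' := -y')
      (fun a b hab => neg_le_neg (hψ (neg_le_neg hab))) (by simp [hψ0]) hx hxx'
      (by rw [neg_neg]; linarith) (by rw [neg_neg]; linarith) (neg_nonneg.2 ht)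
    rwa [neg_sub_neg, abs_sub_comm, neg_neg, abs_neg] at h

end ProxEquation

section ProxMap

variable {ψ : ℝ → ℝ} {P : ℝ → ℝ → ℝ} {f : ℝ → ℝ} {x : ℝ}

/-- `(prox_x ρ)'` when `P x = prox_x ρ` and `ψ = ρ'`. -/
def proxDeriv (ψ : ℝ → ℝ) (P : ℝ → ℝ → ℝ) (x t : ℝ) : ℝ :=
  (1 + x * deriv ψ (P x t))⁻¹

theorem one_le_one_add_mul_deriv (hψ : Monotone ψ) (hx : 0 ≤ x) (y : ℝ) :
    1 ≤ 1 + x * deriv ψ y :=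
  le_add_of_nonneg_right (mul_nonneg hx hψ.deriv_nonneg)

theorem one_add_mul_deriv_ne_zero (hψ : Monotone ψ) (hx : 0 ≤ x) (y : ℝ) :
    1 + x * deriv ψ y ≠ 0 :=
  (zero_lt_one.trans_le (one_le_one_add_mul_deriv hψ hx y)).ne'

theorem norm_proxDeriv_le_one (hψ : Monotone ψ) (hx : 0 ≤ x) (t : ℝ) :
    ‖proxDeriv ψ P x t‖ ≤ 1 := by
  have h := one_le_one_add_mul_deriv hψ hx (P x t)
  rw [proxDeriv, norm_inv, Real.norm_of_nonneg (zero_le_one.trans h)]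
  exact inv_le_one_of_one_le₀ h

theorem hasDerivAt_prox (hψ : Monotone ψ) (hψd : Differentiable ℝ ψ) (hx : 0 ≤ x)
    (hP : ∀ t, P x t + x * ψ (P x t) = t) (hPc : Continuous (P x)) (t : ℝ) :
    HasDerivAt (P x) (proxDeriv ψ P x t) t :=
  HasDerivAt.of_local_left_inverse hPc.continuousAt
    ((hasDerivAt_id' _).add ((hψd _).hasDerivAt.const_mul x))
    (one_add_mul_deriv_ne_zero hψ hx _) (Eventually.of_forall hP)

theorem continuous_proxDeriv (hψ : Monotone ψ) (hψ' : Continuous (deriv ψ)) (hx : 0 ≤ x)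
    (hPc : Continuous (P x)) : Continuous (proxDeriv ψ P x) :=
  (continuous_const.add (continuous_const.mul (hψ'.comp hPc))).inv₀ fun _ =>
    one_add_mul_deriv_ne_zero hψ hx _

theorem continuousOn_prox_param (hψ : Monotone ψ) (hψ0 : ψ 0 = 0)
    (hP : ∀ x, 0 ≤ x → ∀ t, P x t + x * ψ (P x t) = t) (t : ℝ) :
    ContinuousOn (fun x => P x t) (Ici 0) := by
  refine (LipschitzOnWith.of_dist_le_mul (K := ‖ψ t‖₊) fun x hx x' hx' => ?_).continuousOn
  rw [Real.dist_eq, Real.dist_eq, coe_nnnorm, Real.norm_eq_abs, mul_comm]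
  rcases le_total x x' with h | h
  · rw [abs_sub_comm x]
    simpa [abs_of_nonneg (sub_nonneg.2 h)] using
      abs_prox_sub_le hψ hψ0 hx h (hP x hx t) (hP x' hx' t)
  · rw [abs_sub_comm (P x t)]
    simpa [abs_of_nonneg (sub_nonneg.2 h)] using
      abs_prox_sub_le hψ hψ0 hx' h (hP x' hx' t) (hP x hx t)

theorem continuousOn_proxDeriv_param (hψ : Monotone ψ) (hψ0 : ψ 0 = 0)
    (hψ' : Continuous (deriv ψ)) (hP : ∀ x, 0 ≤ x → ∀ t, P x t + x * ψ (P x t) = t) (t : ℝ) :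
    ContinuousOn (fun x => proxDeriv ψ P x t) (Ici 0) :=
  (continuousOn_const.add (continuousOn_id.mul
    (hψ'.comp_continuousOn (continuousOn_prox_param hψ hψ0 hP t)))).inv₀ fun _ hx =>
      one_add_mul_deriv_ne_zero hψ hx _

theorem integrable_proxDeriv_mul (hψ : Monotone ψ) (hψ' : Continuous (deriv ψ)) (hx : 0 ≤ x)
    (hPc : Continuous (P x)) (hf : Integrable f) :
    Integrable (fun t => proxDeriv ψ P x t * f t) :=
  hf.bdd_mul (continuous_proxDeriv hψ hψ' hx hPc).aestronglyMeasurable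
    (Eventually.of_forall (norm_proxDeriv_le_one hψ hx))

theorem integral_proxDeriv_mul_le (hψ : Monotone ψ) (hψ' : Continuous (deriv ψ)) (hx : 0 ≤ x)
    (hPc : Continuous (P x)) (hf : Integrable f) (hf0 : ∀ t, 0 ≤ f t) :
    ∫ t, proxDeriv ψ P x t * f t ≤ ∫ t, f t :=
  integral_mono (integrable_proxDeriv_mul hψ hψ' hx hPc hf) hf fun t =>
    mul_le_of_le_one_left (hf0 t) ((le_abs_self _).trans (norm_proxDeriv_le_one hψ hx t))

theorem continuousOn_integral_proxDeriv_mul (hψ : Monotone ψ) (hψ0 : ψ 0 = 0)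
    (hψ' : Continuous (deriv ψ)) (hP : ∀ x, 0 ≤ x → ∀ t, P x t + x * ψ (P x t) = t)
    (hPc : ∀ x, 0 ≤ x → Continuous (P x)) (hf : Integrable f) :
    ContinuousOn (fun x => ∫ t, proxDeriv ψ P x t * f t) (Ici 0) := by
  refine continuousOn_of_dominated (bound := fun t => ‖f t‖)
    (fun x hx => (integrable_proxDeriv_mul hψ hψ' hx (hPc x hx) hf).aestronglyMeasurable)
    (fun x hx => Eventually.of_forall fun t => ?_) hf.norm
    (Eventually.of_forall fun t => (continuousOn_proxDeriv_param hψ hψ0 hψ' hP t).mul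
      continuousOn_const)
  rw [norm_mul]
  exact mul_le_of_le_one_left (norm_nonneg _) (norm_proxDeriv_le_one hψ hx t)

theorem antitoneOn_integral_proxDeriv_mul (hψ : Monotone ψ) (hψ0 : ψ 0 = 0)
    (hψd : Differentiable ℝ ψ) (hψ' : Continuous (deriv ψ))
    (hP : ∀ x, 0 ≤ x → ∀ t, P x t + x * ψ (P x t) = t)
    (hPc : ∀ x, 0 ≤ x → Continuous (P x)) (hf : ContDiff ℝ 1 f) (hfint : Integrable f)
    (hfsgn : ∀ t, t ≠ 0 → Real.sign (deriv f t) = -Real.sign t)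
    (hlim₁ : Tendsto (fun t => t * f t) atTop (𝓝 0))
    (hlim₂ : Tendsto (fun t => t * f t) atBot (𝓝 0)) :
    AntitoneOn (fun x => ∫ t, proxDeriv ψ P x t * f t) (Ici 0) := by
  intro x hx y hy hxy
  have hint (z : ℝ) (hz : 0 ≤ z) := integrable_proxDeriv_mul hψ hψ' hz (hPc z hz) hfint
  have hmem (t : ℝ) : P x t - P y t ∈ uIcc 0 t :=
    prox_sub_mem_uIcc hψ hψ0 hx hxy (hP x hx t) (hP y hy t)
  have hparts : 0 ≤ ∫ t, f t * (proxDeriv ψ P x t - proxDeriv ψ P y t) :=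
    integral_mul_deriv_nonneg_of_deriv_mul_nonpos (v := fun t => P x t - P y t)
      (fun t => (hf.differentiable one_ne_zero t).hasDerivAt)
      (fun t => (hasDerivAt_prox hψ hψd hx (hP x hx) (hPc x hx) t).sub
        (hasDerivAt_prox hψ hψd hy (hP y hy) (hPc y hy) t))
      (hf.continuous_deriv le_rfl)
      ((continuous_proxDeriv hψ hψ' hx (hPc x hx)).sub
        (continuous_proxDeriv hψ hψ' hy (hPc y hy)))
      (((hint x hx).sub (hint y hy)).congr <| Eventually.of_forall fun t => by
        simp only [Pi.sub_apply]; ring)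
      (fun t => mul_nonpos_of_sign_eq_neg_sign (hfsgn t) (hmem t))
      (tendsto_mul_zero_of_mem_uIcc hlim₁ hmem) (tendsto_mul_zero_of_mem_uIcc hlim₂ hmem)
  have hsplit : ∫ t, f t * (proxDeriv ψ P x t - proxDeriv ψ P y t) =
      (∫ t, proxDeriv ψ P x t * f t) - ∫ t, proxDeriv ψ P y t * f t := by
    rw [← integral_sub (hint x hx) (hint y hy)]
    congr 1 with t
    ring
  simp only
  linarith

end ProxMap

theorem Ffun_eq_proxDeriv (ρ : ℝ → ℝ) (κ τ : ℝ) (P : ℝ → ℝ → ℝ) (f : ℝ → ℝ) (x : ℝ) :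
    Ffun ρ κ τ P f x = κ - τ * x - 1 + ∫ t, proxDeriv (deriv ρ) P x t * f t :=
  rfl

theorem statement16 (ρ : ℝ → ℝ) (hρconv : ConvexOn ℝ Set.univ ρ)
    (hρsmooth : ContDiff ℝ 2 ρ)
    -- sgn(ψ(x)) = sgn(x) for x ≠ 0
    (hsgn : ∀ x : ℝ, x ≠ 0 → Real.sign (deriv ρ x) = Real.sign x)
    (κ τ : ℝ) (hκ : 0 < κ) (hτ : 0 < τ)
    -- the density f of W
    (f : ℝ → ℝ) (hf : ContDiff ℝ 1 f) (hfnonneg : ∀ t, 0 ≤ f t)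
    (hfone : ∫ t : ℝ, f t = 1)
    -- sgn(f'(t)) = -sgn(t) for t ≠ 0
    (hfsgn : ∀ t : ℝ, t ≠ 0 → Real.sign (deriv f t) = -Real.sign t)
    -- t·f(t) → 0 as |t| → ∞
    (hlim₁ : Tendsto (fun t => t * f t) atTop (nhds 0))
    (hlim₂ : Tendsto (fun t => t * f t) atBot (nhds 0))
    -- P x t = prox_x(ρ)(t) : the unique y with y + x ψ(y) = t for x > 0, and prox_0 = id
    (P : ℝ → ℝ → ℝ)
    (hP : ∀ x : ℝ, 0 < x → ∀ t, P x t + x * deriv ρ (P x t) = t)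
    (hP0 : ∀ t, P 0 t = t)
    -- prox_x(ρ) is 1-Lipschitz in t
    (hPlip : ∀ x : ℝ, 0 ≤ x → LipschitzWith 1 (P x)) :
    -- F is strictly decreasing on [0, ∞)
    StrictAntiOn (Ffun ρ κ τ P f) (Set.Ici 0) ∧
    -- F(0) = κ
    Ffun ρ κ τ P f 0 = κ ∧
    -- F(x) → -∞ as x → ∞
    Tendsto (Ffun ρ κ τ P f) atTop atBot ∧
    -- the equation F(x) = 0 has a unique solution in (0, ∞)
    (∃! x : ℝ, x ∈ Set.Ioi (0 : ℝ) ∧ Ffun ρ κ τ P f x = 0) := by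
  have hψ : ContDiff ℝ 1 (deriv ρ) := hρsmooth.deriv'
  have hmono : Monotone (deriv ρ) := monotoneOn_univ.1 <|
    hρconv.monotoneOn_deriv fun x _ => (hρsmooth.differentiable two_ne_zero).differentiableAt
  have hψ0 : deriv ρ 0 = 0 := eq_zero_of_sign_eq_sign hψ.continuous.continuousAt hsgn
  have hPeq (x : ℝ) (hx : 0 ≤ x) (t : ℝ) : P x t + x * deriv ρ (P x t) = t := by
    rcases hx.eq_or_lt with rfl | hx
    · simp [hP0]
    · exact hP x hx t
  have hPc (x : ℝ) (hx : 0 ≤ x) : Continuous (P x) := (hPlip x hx).continuous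
  have hfint : Integrable f := by
    by_contra h
    simp [integral_undef h] at hfone
  have hψ' : Continuous (deriv (deriv ρ)) := hψ.continuous_deriv le_rfl
  have hF0 : Ffun ρ κ τ P f 0 = κ := by simp [Ffun, hfone]
  have hFanti : StrictAntiOn (Ffun ρ κ τ P f) (Ici 0) :=
    StrictAntiOn.add_antitone (fun x _ y _ hxy => by gcongr)
      (antitoneOn_integral_proxDeriv_mul hmono hψ0 (hψ.differentiable one_ne_zero) hψ' hPeq hPc
        hf hfint hfsgn hlim₁ hlim₂)
  have hFcont : ContinuousOn (Ffun ρ κ τ P f) (Ici 0) :=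
    ContinuousOn.add (by fun_prop)
      (continuousOn_integral_proxDeriv_mul hmono hψ0 hψ' hPeq hPc hfint)
  have hFbot : Tendsto (Ffun ρ κ τ P f) atTop atBot := by
    refine tendsto_atBot_mono' atTop (f₁ := fun x => κ - τ * x) ?_ ?_
    · filter_upwards [eventually_ge_atTop 0] with x hx
      have := integral_proxDeriv_mul_le hmono hψ' hx (hPc x hx) hfint hfnonneg
      rw [Ffun_eq_proxDeriv]
      linarith
    · exact tendsto_atBot_add_const_left _ κ
        (tendsto_neg_atTop_atBot.comp (tendsto_id.const_mul_atTop hτ))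
  exact ⟨hFanti, hF0, hFbot, hFanti.existsUnique_mem_Ioi_eq hFcont (by rwa [hF0]) hFbot⟩
end
end

section
/- Let A be a p × p positive semidefinite matrix written in block form A = [[Γ, v], [vᵀ, a]] with Γ of size (p−1) × (p−1), v ∈ ℝ^{p−1}, a ∈ ℝ, and let τ > 0; set Γ_τ = Γ + τ Id_{p−1}. Then tr((A + τ Id_p)⁻¹) = tr(Γ_τ⁻¹) + (1 + vᵀ Γ_τ⁻² v) / (a + τ − vᵀ Γ_τ⁻¹ v). In particular, |tr((A + τ Id_p)⁻¹) − tr(Γ_τ⁻¹)| ≤ (1 + a/τ)/τ. -/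
/-!
Block inversion through the Schur complement `s = a + τ - vᵀ Γ_τ⁻¹ v` gives the trace formula,
the off-diagonal blocks contributing `‖Γ_τ⁻¹ v‖² / s`. Evaluating the quadratic form of `A` at
`(-u, 1)` with `u = Γ_τ⁻¹ v` gives `vᵀ u + τ ‖u‖² ≤ a`, i.e. `s ≥ τ (1 + ‖u‖²)`, so the correction
lies in `[0, 1/τ]`.
-/

open Matrix

namespace Matrix

theorem trace_fromBlocks {l m R : Type*} [Fintype l] [Fintype m] [AddCommMonoid R]
    (A : Matrix l l R) (B : Matrix l m R) (C : Matrix m l R) (D : Matrix m m R) :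
    trace (fromBlocks A B C D) = trace A + trace D := by
  simp [trace, Fintype.sum_sum_type]

theorem replicateRow_mul_mul_replicateCol {n R : Type*} [Fintype n] [CommSemiring R]
    (v : n → R) (M : Matrix n n R) (w : n → R) :
    replicateRow Unit v * M * replicateCol Unit w = of fun _ _ => v ⬝ᵥ M *ᵥ w := by
  rw [Matrix.mul_assoc, ← replicateCol_mulVec, replicateRow_mul_replicateCol]

theorem trace_inv_fromBlocks_replicateCol {n K : Type*} [Fintype n] [DecidableEq n] [Field K]
    (G : Matrix n n K) (hG : IsUnit G) (v w : n → K) (d : K) (hs : d - v ⬝ᵥ G⁻¹ *ᵥ w ≠ 0) :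
    trace (fromBlocks G (replicateCol Unit w) (replicateRow Unit v) (of fun _ _ => d))⁻¹ =
      trace G⁻¹ + (1 + v ⬝ᵥ (G⁻¹ * G⁻¹) *ᵥ w) / (d - v ⬝ᵥ G⁻¹ *ᵥ w) := by
  set s := d - v ⬝ᵥ G⁻¹ *ᵥ w
  let _ := hG.invertible
  have hschur : (of fun _ _ => d) - replicateRow Unit v * ⅟G * replicateCol Unit w =
      s • (1 : Matrix Unit Unit K) := by
    ext; simp [s, invOf_eq_nonsing_inv, replicateRow_mul_mul_replicateCol]
  let hinv : Invertible (s • (1 : Matrix Unit Unit K)) := ⟨s⁻¹ • 1, by simp [hs], by simp [hs]⟩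
  let _ : Invertible ((of fun _ _ => d) - replicateRow Unit v * ⅟G * replicateCol Unit w) :=
    hschur ▸ hinv
  let _ := fromBlocks₁₁Invertible G (replicateCol Unit w) (replicateRow Unit v) (of fun _ _ => d)
  have hschur_inv : ⅟((of fun _ _ => d) - replicateRow Unit v * ⅟G * replicateCol Unit w) =
      s⁻¹ • (1 : Matrix Unit Unit K) :=
    invOf_eq_right_inv (by rw [hschur]; simp [hs])
  have hcross : trace (G⁻¹ * replicateCol Unit w * replicateRow Unit v * G⁻¹) =
      v ⬝ᵥ (G⁻¹ * G⁻¹) *ᵥ w := by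
    rw [trace_mul_cycle, trace_mul_comm, ← Matrix.mul_assoc G⁻¹, ← Matrix.mul_assoc,
      replicateRow_mul_mul_replicateCol]
    simp [trace]
  rw [← invOf_eq_nonsing_inv, invOf_fromBlocks₁₁_eq, trace_fromBlocks, trace_add, hschur_inv,
    invOf_eq_nonsing_inv]
  simp only [Matrix.mul_smul, Matrix.mul_one, smul_mul, Algebra.smul_mul_assoc, trace_smul, hcross,
    smul_eq_mul, trace_one, Fintype.card_unique, Nat.cast_one, mul_one]
  ring

theorem dotProduct_mulVec_inv_mul_inv {n R : Type*} [Fintype n] [DecidableEq n] [CommRing R]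
    {G : Matrix n n R} (hG : G.IsSymm) (v : n → R) :
    v ⬝ᵥ (G⁻¹ * G⁻¹) *ᵥ v = G⁻¹ *ᵥ v ⬝ᵥ G⁻¹ *ᵥ v := by
  rw [← mulVec_mulVec, dotProduct_mulVec, ← mulVec_transpose, transpose_nonsing_inv, hG.eq]

namespace PosSemidef

variable {n : Type*} [Fintype n] {Γ : Matrix n n ℝ} {v : n → ℝ} {a : ℝ}

theorem quadratic_nonneg_of_fromBlocks
    (hA : (fromBlocks Γ (replicateCol Unit v) (replicateRow Unit v) (of fun _ _ => a)).PosSemidef)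
    (x : n → ℝ) : 0 ≤ x ⬝ᵥ Γ *ᵥ x - 2 * (v ⬝ᵥ x) + a := by
  have hcol : replicateCol Unit v *ᵥ 1 = v := by ext; simp [mulVec, dotProduct]
  have hrow : (replicateRow Unit v *ᵥ x) () = v ⬝ᵥ x := rfl
  have hcorner : ((of fun _ _ => a : Matrix Unit Unit ℝ) *ᵥ 1) () = a := by
    simp [mulVec, dotProduct]
  have h := hA.dotProduct_mulVec_nonneg (Sum.elim (-x) 1)
  simp only [star_trivial, fromBlocks_mulVec, Sum.elim_comp_inl, mulVec_neg, Sum.elim_comp_inr,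
    hcol, sumElim_dotProduct_sumElim, dotProduct_add, dotProduct_neg, neg_dotProduct, neg_neg,
    dotProduct_comm x v, dotProduct_pUnit, Pi.one_apply, hrow, one_mul, hcorner] at h
  linarith

theorem dotProduct_add_mul_le_of_fromBlocks [DecidableEq n]
    (hA : (fromBlocks Γ (replicateCol Unit v) (replicateRow Unit v) (of fun _ _ => a)).PosSemidef)
    {τ : ℝ} {u : n → ℝ} (hu : (Γ + τ • 1) *ᵥ u = v) : v ⬝ᵥ u + τ * (u ⬝ᵥ u) ≤ a := by
  have hΓu : Γ *ᵥ u = v - τ • u := by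
    rw [← hu, add_mulVec, smul_mulVec, one_mulVec, add_sub_cancel_right]
  have h := hA.quadratic_nonneg_of_fromBlocks u
  rw [hΓu, dotProduct_sub, dotProduct_smul, smul_eq_mul, dotProduct_comm u v] at h
  linarith

end PosSemidef

end Matrix

theorem statement17 {q : ℕ} (Γ : Matrix (Fin q) (Fin q) ℝ) (v : Fin q → ℝ) (a : ℝ)
    (τ : ℝ) (hτ : 0 < τ)
    -- A = [[Γ, v], [vᵀ, a]] in block form
    (A : Matrix (Fin q ⊕ Unit) (Fin q ⊕ Unit) ℝ)
    (hA : A = Matrix.fromBlocks Γ (fun i (_ : Unit) => v i) (fun (_ : Unit) j => v j)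
      (fun (_ : Unit) (_ : Unit) => a))
    -- A is positive semidefinite
    (hApsd : A.PosSemidef)
    -- Γ_τ = Γ + τ Id
    (Γτ : Matrix (Fin q) (Fin q) ℝ) (hΓτ : Γτ = Γ + τ • (1 : Matrix (Fin q) (Fin q) ℝ)) :
    Matrix.trace ((A + τ • (1 : Matrix (Fin q ⊕ Unit) (Fin q ⊕ Unit) ℝ))⁻¹) =
      Matrix.trace Γτ⁻¹ +
        (1 + v ⬝ᵥ (Γτ⁻¹ * Γτ⁻¹).mulVec v) / (a + τ - v ⬝ᵥ Γτ⁻¹.mulVec v) ∧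
    |Matrix.trace ((A + τ • (1 : Matrix (Fin q ⊕ Unit) (Fin q ⊕ Unit) ℝ))⁻¹) -
        Matrix.trace Γτ⁻¹| ≤ (1 + a / τ) / τ := by
  replace hA : A = fromBlocks Γ (replicateCol Unit v) (replicateRow Unit v) (of fun _ _ => a) :=
    hA
  subst hA
  have hΓ : Γ.PosSemidef := hApsd.submatrix Sum.inl
  have hG : Γτ.PosDef := hΓτ ▸ PosDef.posSemidef_add hΓ (PosDef.one.smul hτ)
  set u := Γτ⁻¹ *ᵥ v
  have hu : (Γ + τ • 1) *ᵥ u = v := by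
    rw [← hΓτ, mulVec_mulVec, mul_nonsing_inv _ ((isUnit_iff_isUnit_det _).mp hG.isUnit),
      one_mulVec]
  have hbound := hApsd.dotProduct_add_mul_le_of_fromBlocks hu
  have hvu : 0 ≤ v ⬝ᵥ u := by simpa using hG.inv.posSemidef.dotProduct_mulVec_nonneg v
  have huu : 0 ≤ u ⬝ᵥ u := dotProduct_self_star_nonneg u
  have ha : 0 ≤ a := by nlinarith
  have hs : τ * (1 + u ⬝ᵥ u) ≤ a + τ - v ⬝ᵥ u := by linarith
  have hspos : 0 < a + τ - v ⬝ᵥ u := lt_of_lt_of_le (by positivity) hs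
  have hAτ : fromBlocks Γ (replicateCol Unit v) (replicateRow Unit v) (of fun _ _ => a) + τ • 1 =
      fromBlocks Γτ (replicateCol Unit v) (replicateRow Unit v) (of fun _ _ => a + τ) := by
    rw [hΓτ, ← fromBlocks_one, fromBlocks_smul, fromBlocks_add]
    congr 1 <;> ext <;> simp
  have htr := trace_inv_fromBlocks_replicateCol Γτ hG.isUnit v v (a + τ) hspos.ne'
  rw [← hAτ] at htr
  refine ⟨htr, ?_⟩
  rw [htr, add_sub_cancel_left,
    dotProduct_mulVec_inv_mul_inv (isHermitian_iff_isSymm.mp hG.isHermitian) v]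
  calc |(1 + u ⬝ᵥ u) / (a + τ - v ⬝ᵥ u)| = (1 + u ⬝ᵥ u) / (a + τ - v ⬝ᵥ u) :=
        abs_of_nonneg (by positivity)
    _ ≤ 1 / τ := by rw [div_le_div_iff₀ hspos hτ]; linarith
    _ ≤ (1 + a / τ) / τ := by gcongr; linarith [div_nonneg ha hτ.le]
end

section
/- Fix B > 0 and u ∈ ℝ, and define h_u(x) = 1/(1 + x·ψ'(prox_x(ρ)(u))) for x ≥ 0. Suppose ψ' is Lipschitz on [−|u|, |u|] with Lipschitz constant L(|u|) and sgn(ψ(x)) = sgn(x) for x ≠ 0. Then for all x, y ∈ [0, B] with |x − y| ≤ η, one has |h_u(x) − h_u(y)| ≤ η · ( [ψ'(0) + L(|u|)·|u|] + B·L(|u|)·(|ψ(u)| + |ψ(−u)|) ). Consequently, for real numbers r̃₁, …, r̃ₙ and gₙ(x) = (1/n) Σᵢ h_{r̃ᵢ}(x), one has sup over pairs x, y ∈ [0, B] with |x − y| ≤ η of |gₙ(x) − gₙ(y)| ≤ η · (1/n) Σᵢ F_{ρ,B}(r̃ᵢ), where F_{ρ,B}(u) = [ψ'(0) + L(|u|)·|u|]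 + B·L(|u|)·(|ψ(u)| + |ψ(−u)|). -/
noncomputable section

open scoped BigOperators
open Set Filter Topology

/-- `F_{ρ,B}(u) = [ψ'(0) + L(|u|)·|u|] + B·L(|u|)·(|ψ(u)| + |ψ(−u)|)`. -/
def Frho (ρ : ℝ → ℝ) (L : ℝ → ℝ) (B u : ℝ) : ℝ :=
  (deriv (deriv ρ) 0 + L |u| * |u|) + B * L |u| * (|deriv ρ u| + |deriv ρ (-u)|)

/-- `h_u(x) = 1/(1 + x·ψ'(prox_x(ρ)(u)))`. -/
def hfun (ρ : ℝ → ℝ) (P : ℝ → ℝ → ℝ) (u x : ℝ) : ℝ :=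
  (1 + x * deriv (deriv ρ) (P x u))⁻¹

private lemma sign_pos_aux {t : ℝ} (h : Real.sign t = 1) : 0 < t := by
  rcases lt_trichotomy t 0 with h1 | h1 | h1
  · rw [Real.sign_of_neg h1] at h; norm_num at h
  · rw [h1, Real.sign_zero] at h; norm_num at h
  · exact h1

private lemma sign_neg_aux {t : ℝ} (h : Real.sign t = -1) : t < 0 := by
  rcases lt_trichotomy t 0 with h1 | h1 | h1
  · exact h1
  · rw [h1, Real.sign_zero] at h; norm_num at h
  · rw [Real.sign_of_pos h1] at h; norm_num at h

private lemma statement19_aux (ρ : ℝ → ℝ) (hρconv : ConvexOn ℝ Set.univ ρ)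
    (hρsmooth : ContDiff ℝ 2 ρ)
    (hsgn : ∀ x : ℝ, x ≠ 0 → Real.sign (deriv ρ x) = Real.sign x)
    (L : ℝ → ℝ)
    (hL : ∀ u a b : ℝ, a ∈ Set.Icc (-|u|) |u| → b ∈ Set.Icc (-|u|) |u| →
      |deriv (deriv ρ) a - deriv (deriv ρ) b| ≤ L |u| * |a - b|)
    (B : ℝ) (hB : 0 < B)
    (P : ℝ → ℝ → ℝ)
    (hP : ∀ x : ℝ, 0 < x → ∀ u, P x u + x * deriv ρ (P x u) = u)
    (hP0 : ∀ u, P 0 u = u)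
    (u : ℝ) :
    ∀ η x y : ℝ, x ∈ Set.Icc (0 : ℝ) B → y ∈ Set.Icc (0 : ℝ) B → |x - y| ≤ η →
      |hfun ρ P u x - hfun ρ P u y| ≤ η * Frho ρ L B u := by
  set ψ := deriv ρ with hψ
  set ψ' := deriv ψ with hψ'
  -- regularity
  have h2 : ContDiff ℝ (1 + 1) ρ := by exact_mod_cast hρsmooth
  rw [contDiff_succ_iff_deriv] at h2
  obtain ⟨hψdiff, hψ'cont⟩ := contDiff_one_iff_deriv.mp h2.2.2
  have hρdiff : Differentiable ℝ ρ := h2.1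
  -- ψ is monotone
  have hψmono : Monotone ψ := by
    have := hρconv.monotoneOn_deriv (fun x _ => (hρdiff x))
    exact monotoneOn_univ.mp this
  -- ψ' ≥ 0 everywhere
  have hψ'nonneg : ∀ t : ℝ, 0 ≤ ψ' t := by
    intro t
    have h := (hψdiff t).hasDerivAt
    rw [hasDerivAt_iff_tendsto_slope] at h
    have h2' : Tendsto (slope ψ t) (𝓝[>] t) (𝓝 (deriv ψ t)) :=
      h.mono_left (nhdsWithin_mono t fun y hy => ne_of_gt hy)
    refine ge_of_tendsto h2' ?_
    filter_upwards [self_mem_nhdsWithin] with y hy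
    rw [slope_def_field]
    exact div_nonneg (sub_nonneg.2 (hψmono (le_of_lt hy))) (sub_nonneg.2 (le_of_lt hy))
  -- ψ positive on positives, negative on negatives
  have hψpos : ∀ t : ℝ, 0 < t → 0 < ψ t := fun t ht => by
    have := hsgn t (ne_of_gt ht); rw [Real.sign_of_pos ht] at this
    exact sign_pos_aux this
  have hψneg : ∀ t : ℝ, t < 0 → ψ t < 0 := fun t ht => by
    have := hsgn t (ne_of_lt ht); rw [Real.sign_of_neg ht] at this
    exact sign_neg_aux this
  -- ψ 0 = 0
  have hψ0 : ψ 0 = 0 := by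
    have hc : Tendsto ψ (𝓝[>] (0:ℝ)) (𝓝 (ψ 0)) :=
      ((hψdiff.continuous.continuousAt).tendsto).mono_left nhdsWithin_le_nhds
    have h1 : ψ 0 ≤ 0 := by
      have hc' : Tendsto ψ (𝓝[<] (0:ℝ)) (𝓝 (ψ 0)) :=
        ((hψdiff.continuous.continuousAt).tendsto).mono_left nhdsWithin_le_nhds
      refine le_of_tendsto hc' ?_
      filter_upwards [self_mem_nhdsWithin] with t ht
      exact le_of_lt (hψneg t ht)
    have h2' : 0 ≤ ψ 0 := by
      refine ge_of_tendsto hc ?_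
      filter_upwards [self_mem_nhdsWithin] with t ht
      exact le_of_lt (hψpos t ht)
    linarith
  -- fixed point equation for all x ≥ 0
  have heq : ∀ x : ℝ, 0 ≤ x → P x u + x * ψ (P x u) = u := by
    intro x hx
    rcases eq_or_lt_of_le hx with h | h
    · rw [← h, hP0]; ring
    · exact hP x h u
  -- |P x u| ≤ |u| for x ≥ 0
  have hPle : ∀ x : ℝ, 0 ≤ x → |P x u| ≤ |u| := by
    intro x hx
    by_contra hcon
    push_neg at hcon
    set p := P x u with hp
    have he := heq x hx
    rcases abs_cases p with ⟨h1, _⟩ | ⟨h1, _⟩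
    · -- p ≥ 0, so p = |p| > |u| ≥ 0
      have hppos : 0 < p := lt_of_le_of_lt (abs_nonneg u) (h1 ▸ hcon)
      have := hψpos p hppos
      have : u > |u| := by nlinarith [le_abs_self u, abs_nonneg u, h1 ▸ hcon]
      linarith [le_abs_self u]
    · -- p < 0
      have hpneg : p < 0 := by nlinarith [abs_nonneg u]
      have := hψneg p hpneg
      have : u < -|u| := by nlinarith [neg_abs_le u]
      linarith [neg_abs_le u]
  -- L |u| ≥ 0 when u ≠ 0
  have hLnn : u ≠ 0 → 0 ≤ L |u| := by
    intro hu
    have habs0 : (0:ℝ) ≤ |u| := abs_nonneg u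
    have h := hL u |u| (-|u|) ⟨by linarith, le_rfl⟩ ⟨le_rfl, by linarith⟩
    have habs : (0:ℝ) < |u| := abs_pos.mpr hu
    have hval : abs (|u| - -|u|) = 2 * |u| := by
      rw [sub_neg_eq_add, abs_of_nonneg (by linarith)]; ring
    rw [hval] at h
    nlinarith [abs_nonneg (ψ' |u| - ψ' (-|u|))]
  -- bound on |ψ q| for |q| ≤ |u|
  have hψbound : ∀ q : ℝ, |q| ≤ |u| → |ψ q| ≤ |ψ u| + |ψ (-u)| := by
    intro q hq
    rw [abs_le] at hq
    rcases abs_cases u with ⟨h1, _⟩ | ⟨h1, _⟩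
    · have hlo : ψ (-u) ≤ ψ q := hψmono (by linarith)
      have hhi : ψ q ≤ ψ u := hψmono (by linarith)
      rw [abs_le]
      constructor
      · nlinarith [neg_abs_le (ψ (-u)), abs_nonneg (ψ u)]
      · nlinarith [le_abs_self (ψ u), abs_nonneg (ψ (-u))]
    · have hlo : ψ u ≤ ψ q := hψmono (by linarith)
      have hhi : ψ q ≤ ψ (-u) := hψmono (by linarith)
      rw [abs_le]
      constructor
      · nlinarith [neg_abs_le (ψ u), abs_nonneg (ψ (-u))]
      · nlinarith [le_abs_self (ψ (-u)), abs_nonneg (ψ u)]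
  intro η x y hx hy hη
  obtain ⟨hx0, hxB⟩ := hx
  obtain ⟨hy0, hyB⟩ := hy
  set p := P x u with hpdef
  set q := P y u with hqdef
  have hpu : |p| ≤ |u| := hPle x hx0
  have hqu : |q| ≤ |u| := hPle y hy0
  have hpI : p ∈ Set.Icc (-|u|) |u| := Set.mem_Icc.mpr (abs_le.mp hpu)
  have hqI : q ∈ Set.Icc (-|u|) |u| := Set.mem_Icc.mpr (abs_le.mp hqu)
  have h0I : (0:ℝ) ∈ Set.Icc (-|u|) |u| := ⟨neg_nonpos_of_nonneg (abs_nonneg u), abs_nonneg u⟩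
  -- contraction: |q - p| ≤ |x - y| * (|ψ u| + |ψ (-u)|)
  have hqp : |q - p| ≤ |x - y| * (|ψ u| + |ψ (-u)|) := by
    have hep := heq x hx0
    have heqy := heq y hy0
    have hkey : (q - p) + x * (ψ q - ψ p) = (x - y) * ψ q := by linarith
    have hmono : 0 ≤ (q - p) * (x * (ψ q - ψ p)) := by
      rcases le_total p q with h | h
      · exact mul_nonneg (sub_nonneg.2 h)
          (mul_nonneg hx0 (sub_nonneg.2 (hψmono h)))
      · have h1 : q - p ≤ 0 := sub_nonpos.2 h
        have h2 : x * (ψ q - ψ p) ≤ 0 :=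
          mul_nonpos_of_nonneg_of_nonpos hx0 (sub_nonpos.2 (hψmono h))
        nlinarith [h1, h2]
    have h1 : |q - p| ≤ |(q - p) + x * (ψ q - ψ p)| := by
      have hsq : (q - p)^2 ≤ ((q - p) + x * (ψ q - ψ p))^2 := by
        nlinarith [hmono, sq_nonneg (x * (ψ q - ψ p))]
      exact abs_le.mpr (abs_le_of_sq_le_sq' (by rw [sq_abs]; exact hsq) (abs_nonneg _))
    calc |q - p| ≤ |(x - y) * ψ q| := by rw [← hkey]; exact h1
      _ = |x - y| * |ψ q| := abs_mul _ _
      _ ≤ |x - y| * (|ψ u| + |ψ (-u)|) :=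
          mul_le_mul_of_nonneg_left (hψbound q hqu) (abs_nonneg _)
  -- bound ψ' q ≤ ψ' 0 + L|u| * |u|
  have hψ'q : ψ' q ≤ ψ' 0 + L |u| * |u| := by
    have h := hL u q 0 hqI h0I
    have h2' : ψ' q - ψ' 0 ≤ L |u| * |q| := by
      calc ψ' q - ψ' 0 ≤ |ψ' q - ψ' 0| := le_abs_self _
        _ ≤ L |u| * |q - 0| := h
        _ = L |u| * |q| := by rw [sub_zero]
    have h3 : L |u| * |q| ≤ L |u| * |u| := by
      by_cases hu : u = 0
      · have : |q| = 0 := le_antisymm (by simpa [hu] using hqu) (abs_nonneg q)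
        rw [this, hu]; simp
      · exact mul_le_mul_of_nonneg_left hqu (hLnn hu)
    linarith
  -- the denominators
  set a := 1 + x * ψ' p with ha
  set b := 1 + y * ψ' q with hb
  have ha1 : 1 ≤ a := by nlinarith [hψ'nonneg p]
  have hb1 : 1 ≤ b := by nlinarith [hψ'nonneg q]
  have ha0 : a ≠ 0 := by linarith
  have hb0 : b ≠ 0 := by linarith
  have hdiff : hfun ρ P u x - hfun ρ P u y = (b - a) / (a * b) := by
    rw [hfun, hfun, ← hψ, ← hψ', ← hpdef, ← hqdef, ← ha, ← hb]
    field_simp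
    try ring
  have hdb : |hfun ρ P u x - hfun ρ P u y| ≤ |b - a| := by
    rw [hdiff, abs_div]
    have hab : 1 ≤ |a * b| := by
      rw [abs_mul, abs_of_pos (by linarith), abs_of_pos (by linarith)]; nlinarith
    exact div_le_self (abs_nonneg _) hab
  have hba' : b - a = (y - x) * ψ' q + x * (ψ' q - ψ' p) := by rw [hb, ha]; ring
  have ht1 : |(y - x) * ψ' q| ≤ |x - y| * (ψ' 0 + L |u| * |u|) := by
    rw [abs_mul, abs_sub_comm y x, abs_of_nonneg (hψ'nonneg q)]
    exact mul_le_mul_of_nonneg_left hψ'q (abs_nonneg _)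
  have ht2 : |x * (ψ' q - ψ' p)| ≤ B * L |u| * (|ψ u| + |ψ (-u)|) * |x - y| := by
    rw [abs_mul, abs_of_nonneg hx0]
    by_cases hu : u = 0
    · subst hu
      have hp0 : p = 0 := by
        have : |p| = 0 := le_antisymm (by simpa using hpu) (abs_nonneg p)
        simpa using this
      have hq0 : q = 0 := by
        have : |q| = 0 := le_antisymm (by simpa using hqu) (abs_nonneg q)
        simpa using this
      rw [hp0, hq0]
      simp [hψ0]
    · have hlq := hL u q p hqI hpI
      have hlu := hLnn hu
      calc x * |ψ' q - ψ' p| ≤ x * (L |u| * |q - p|) :=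
            mul_le_mul_of_nonneg_left hlq hx0
        _ ≤ B * (L |u| * |q - p|) :=
            mul_le_mul_of_nonneg_right hxB (mul_nonneg hlu (abs_nonneg _))
        _ ≤ B * (L |u| * (|x - y| * (|ψ u| + |ψ (-u)|))) :=
            mul_le_mul_of_nonneg_left (mul_le_mul_of_nonneg_left hqp hlu) (le_of_lt hB)
        _ = B * L |u| * (|ψ u| + |ψ (-u)|) * |x - y| := by ring
  have hba : |b - a| ≤ |x - y| * Frho ρ L B u := by
    calc |b - a| = |(y - x) * ψ' q + x * (ψ' q - ψ' p)| := by rw [hba']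
      _ ≤ |(y - x) * ψ' q| + |x * (ψ' q - ψ' p)| := abs_add_le _ _
      _ ≤ |x - y| * (ψ' 0 + L |u| * |u|) + B * L |u| * (|ψ u| + |ψ (-u)|) * |x - y| :=
          add_le_add ht1 ht2
      _ = |x - y| * Frho ρ L B u := by simp only [Frho, ← hψ, ← hψ']; ring
  have hF : 0 ≤ Frho ρ L B u := by
    have h0 := hψ'nonneg 0
    rw [Frho, ← hψ, ← hψ']
    by_cases hu : u = 0
    · subst hu; simpa [hψ0] using h0
    · have hlu := hLnn hu
      have h1 : 0 ≤ L |u| * |u| := mul_nonneg hlu (abs_nonneg u)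
      have h2 : 0 ≤ B * L |u| * (|ψ u| + |ψ (-u)|) :=
        mul_nonneg (mul_nonneg hB.le hlu)
          (add_nonneg (abs_nonneg _) (abs_nonneg _))
      linarith
  calc |hfun ρ P u x - hfun ρ P u y| ≤ |b - a| := hdb
    _ ≤ |x - y| * Frho ρ L B u := hba
    _ ≤ η * Frho ρ L B u := mul_le_mul_of_nonneg_right hη hF

theorem statement19 (ρ : ℝ → ℝ) (hρconv : ConvexOn ℝ Set.univ ρ)
    (hρsmooth : ContDiff ℝ 2 ρ)
    -- sgn(ψ(x)) = sgn(x) for x ≠ 0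
    (hsgn : ∀ x : ℝ, x ≠ 0 → Real.sign (deriv ρ x) = Real.sign x)
    -- ψ' is Lipschitz on [−|u|, |u|] with Lipschitz constant L(|u|)
    (L : ℝ → ℝ)
    (hL : ∀ u a b : ℝ, a ∈ Set.Icc (-|u|) |u| → b ∈ Set.Icc (-|u|) |u| →
      |deriv (deriv ρ) a - deriv (deriv ρ) b| ≤ L |u| * |a - b|)
    (B : ℝ) (hB : 0 < B)
    -- P x u = prox_x(ρ)(u) : the unique y with y + x ψ(y) = u for x > 0, and prox_0 = id
    (P : ℝ → ℝ → ℝ)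
    (hP : ∀ x : ℝ, 0 < x → ∀ u, P x u + x * deriv ρ (P x u) = u)
    (hP0 : ∀ u, P 0 u = u)
    (u : ℝ) :
    -- pointwise modulus-of-continuity bound for h_u on [0, B]
    (∀ η x y : ℝ, x ∈ Set.Icc (0 : ℝ) B → y ∈ Set.Icc (0 : ℝ) B → |x - y| ≤ η →
      |hfun ρ P u x - hfun ρ P u y| ≤ η * Frho ρ L B u) ∧
    -- consequence for gₙ(x) = (1/n) Σᵢ h_{r̃ᵢ}(x)
    (∀ (n : ℕ) (r : Fin n → ℝ) (η x y : ℝ),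
      x ∈ Set.Icc (0 : ℝ) B → y ∈ Set.Icc (0 : ℝ) B → |x - y| ≤ η →
      |(1 / (n : ℝ)) * ∑ i, hfun ρ P (r i) x - (1 / (n : ℝ)) * ∑ i, hfun ρ P (r i) y| ≤
        η * ((1 / (n : ℝ)) * ∑ i, Frho ρ L B (r i))) := by
  have key := statement19_aux ρ hρconv hρsmooth hsgn L hL B hB P hP hP0
  refine ⟨key u, ?_⟩
  intro n r η x y hx hy hη
  have hn : (0:ℝ) ≤ 1 / (n:ℝ) := by positivity
  calc |(1 / (n:ℝ)) * ∑ i, hfun ρ P (r i) x - (1 / (n:ℝ)) * ∑ i, hfun ρ P (r i) y|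
      = (1 / (n:ℝ)) * |∑ i, (hfun ρ P (r i) x - hfun ρ P (r i) y)| := by
        rw [← mul_sub, abs_mul, abs_of_nonneg hn, Finset.sum_sub_distrib]
    _ ≤ (1 / (n:ℝ)) * ∑ i, |hfun ρ P (r i) x - hfun ρ P (r i) y| :=
        mul_le_mul_of_nonneg_left (Finset.abs_sum_le_sum_abs _ _) hn
    _ ≤ (1 / (n:ℝ)) * ∑ i, η * Frho ρ L B (r i) :=
        mul_le_mul_of_nonneg_left
          (Finset.sum_le_sum fun i _ => key (r i) η x y hx hy hη) hn
    _ = η * ((1 / (n:ℝ)) * ∑ i, Frho ρ L B (r i)) := by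
        rw [← Finset.mul_sum]; ring
end
end
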